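/- arXiv:1211.6199 — 7 statements merged into one kernel-verified Lean document; each statement's English description precedes it below -/
import Mathlib

section
/- Let $\ell$ be a prime, $q$ a prime power not divisible by $\ell$, and let $n$ be the multiplicative order of $q$ modulo $\ell$. Put $r = \mathrm{ord}_\ell(q^n - 1)$. Suppose $a$ is an integer such that the orbit of $a$ under multiplication by $q$ in $\mathbb{Z}/(q^n-1)\mathbb{Z}$ has size strictly less than $n$. Then $\ell^r$ divides $a$. -/
/-!
Let `b < n` be the size of the orbit, so that `q ^ n - 1 ∣ a * (q ^ b - 1)`. Since `b` is smaller
than the order `n` of `q` modulo `ℓ`, the prime `ℓ` does not divide `q ^ b - 1`, so the full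
`ℓ`-part `ℓ ^ r` of `q ^ n - 1` must divide `a`.
-/

/-- No hypothesis on `m`: for `m = 0` the truncated `m - 1` is `0`, and `padicValNat ℓ 0 = 0`. -/
lemma Int.pow_padicValNat_sub_one_dvd (ℓ m : ℕ) :
    (ℓ : ℤ) ^ padicValNat ℓ (m - 1) ∣ (m : ℤ) - 1 := by
  rcases Nat.eq_zero_or_pos m with rfl | hm
  · simp
  · have h : ℓ ^ padicValNat ℓ (m - 1) ∣ m - 1 := pow_padicValNat_dvd
    have h' := Int.natCast_dvd_natCast.mpr h
    rwa [Nat.cast_sub hm, Nat.cast_pow, Nat.cast_one] at h'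

lemma not_dvd_pow_sub_one_of_lt_orderOf {ℓ q b : ℕ} (hb : 0 < b)
    (hlt : b < orderOf (q : ZMod ℓ)) : ¬ (ℓ : ℤ) ∣ (q : ℤ) ^ b - 1 := by
  intro hdvd
  have hpow : (q : ZMod ℓ) ^ b = 1 := by
    have h := (ZMod.intCast_zmod_eq_zero_iff_dvd _ ℓ).mpr hdvd
    push_cast at h
    exact sub_eq_zero.mp h
  exact (orderOf_le_of_pow_eq_one hb hpow).not_gt hlt

lemma exists_pos_lt_dvd_mul_pow_sub_one {N a q : ℤ} {n : ℕ}
    (h : sInf {b : ℕ | 0 < b ∧ N ∣ a * (q ^ b - 1)} < n) (hN : N ∣ a * (q ^ n - 1)) :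
    ∃ b, 0 < b ∧ b < n ∧ N ∣ a * (q ^ b - 1) := by
  have hn : 0 < n := (Nat.zero_le _).trans_lt h
  obtain ⟨hpos, hdvd⟩ :=
    Nat.sInf_mem (s := {b : ℕ | 0 < b ∧ N ∣ a * (q ^ b - 1)}) ⟨n, hn, hN⟩
  exact ⟨_, hpos, h, hdvd⟩

theorem stmt_1_general (ℓ q n r : ℕ) (hℓ : ℓ.Prime)
    (hn : orderOf (q : ZMod ℓ) = n) (hr : r = padicValNat ℓ (q ^ n - 1))
    (a : ℤ)
    (horb : sInf {b : ℕ | 0 < b ∧ ((q : ℤ) ^ n - 1) ∣ a * ((q : ℤ) ^ b - 1)} < n) :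
    (ℓ : ℤ) ^ r ∣ a := by
  obtain ⟨b, hb, hbn, hdvd⟩ :=
    exists_pos_lt_dvd_mul_pow_sub_one horb (dvd_mul_left _ a)
  have hℓr : (ℓ : ℤ) ^ r ∣ (q : ℤ) ^ n - 1 := by
    simpa [hr] using Int.pow_padicValNat_sub_one_dvd ℓ (q ^ n)
  exact (Nat.prime_iff_prime_int.mp hℓ).pow_dvd_of_dvd_mul_right r
    (not_dvd_pow_sub_one_of_lt_orderOf hb (hn ▸ hbn)) (hℓr.trans hdvd)

theorem stmt_1 (ℓ q n r : ℕ) (hℓ : ℓ.Prime) (hq : IsPrimePow q) (hndvd : ¬ ℓ ∣ q)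
    (hn : orderOf (q : ZMod ℓ) = n) (hr : r = padicValNat ℓ (q ^ n - 1))
    (a : ℤ)
    (horb : sInf {b : ℕ | 0 < b ∧ ((q : ℤ) ^ n - 1) ∣ a * ((q : ℤ) ^ b - 1)} < n) :
    (ℓ : ℤ) ^ r ∣ a :=
  stmt_1_general ℓ q n r hℓ hn hr a horb
end

section
/- Let $v$ be a positive integer and $q$ an integer. Then the $v$-th cyclotomic polynomial $\Phi_v(X)$ divides the polynomial $(X-1)(X^2-1)\cdots(X^{v-1}-1) - (-1)^{v-1} v$ in $\mathbb{Z}[X]$. -/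
/-!
Evaluating at a primitive `v`-th root of unity `ζ ∈ ℂ`, the factorisation
`1 + X + ⋯ + X^(v-1) = ∏_{k=1}^{v-1} (X - ζ^k)` at `X = 1` gives `∏_{k=1}^{v-1} (ζ^k - 1) = (-1)^(v-1) v`,
so `ζ` is a root of the polynomial in question; since `Φ_v` is the minimal polynomial of `ζ` over `ℤ`,
it divides every integer polynomial vanishing at `ζ`.
-/

open Polynomial Finset

theorem IsPrimitiveRoot.prod_pow_sub_one_eq_neg_one_pow_mul {R : Type*} [CommRing R] [IsDomain R]
    {n : ℕ} {μ : R} (hμ : IsPrimitiveRoot μ (n + 1)) :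
    ∏ k ∈ range n, (μ ^ (k + 1) - 1) = (-1) ^ n * (n + 1) := by
  rw [← hμ.prod_pow_sub_one_eq_order, ← mul_assoc, ← pow_add, Even.neg_one_pow ⟨n, rfl⟩, one_mul]

theorem Polynomial.cyclotomic_dvd_of_aeval_eq_zero {n : ℕ} {K : Type*} [Field K] [CharZero K]
    {μ : K} (hμ : IsPrimitiveRoot μ n) {p : ℤ[X]} (hp : aeval μ p = 0) : cyclotomic n ℤ ∣ p := by
  rcases n.eq_zero_or_pos with rfl | hn
  · simp
  rw [cyclotomic_eq_minpoly hμ hn]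
  exact minpoly.isIntegrallyClosed_dvd (hμ.isIntegral hn) hp

open Polynomial in
theorem stmt_3_general (v : ℕ) :
    cyclotomic v ℤ ∣
      (∏ i ∈ Finset.range (v - 1), ((X : ℤ[X]) ^ (i + 1) - 1) - C ((-1) ^ (v - 1) * (v : ℤ))) := by
  rcases v with _ | n
  · simp
  obtain ⟨ζ, hζ⟩ : ∃ ζ : ℂ, IsPrimitiveRoot ζ (n + 1) :=
    ⟨_, Complex.isPrimitiveRoot_exp (n + 1) n.succ_ne_zero⟩
  refine cyclotomic_dvd_of_aeval_eq_zero hζ ?_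
  simp only [Nat.add_sub_cancel, map_sub, map_prod, map_pow, map_one, aeval_X, aeval_C,
    hζ.prod_pow_sub_one_eq_neg_one_pow_mul]
  push_cast
  ring

open Polynomial in
theorem stmt_3 (v : ℕ) (hv : 0 < v) :
    cyclotomic v ℤ ∣
      (∏ i ∈ Finset.range (v - 1), ((X : ℤ[X]) ^ (i + 1) - 1) - C ((-1) ^ (v - 1) * (v : ℤ))) :=
  stmt_3_general v
end

section
/- Let $\ell$ be a prime, $q$ a prime power not divisible by $\ell$, $n \geq 2$ the multiplicative order of $q$ modulo $\ell$, with $n < \ell$, and $r = \mathrm{ord}_\ell(q^n-1)$. Let $k$ be a finite field of characteristic $\ell$. Then in $k[X]$, the polynomial $g(X) = X + X^q + \cdots + X^{q^{n-1}} - n$ is divisible by $(X-1)^n$ but not by $(X-1)^{n+1}$. -/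
/-!
Substitute `X ↦ X + 1`: the multiplicity of `1` as a root of `g` is the index of the first
nonzero Taylor coefficient at `1`, and the `i`-th one is `∑ j < n, C(q ^ j, i)` (less `n` when
`i = 0`). For `i ≤ n < ℓ` the factor `i!` is invertible in `k`, and `i! * C(N, i)` is the falling
factorial polynomial evaluated at `N`. Since `q` has order `n` in `k`, summing a polynomial of
degree `≤ n` over the powers `q ^ j`, `j < n`, keeps only its coefficients of degree `0` and `n`;
for the falling factorial of degree `i` this gives `0` when `0 < i < n` and `n ≠ 0` when `i = n`.
-/

open Polynomial Finset Nat

theorem X_sub_C_pow_dvd_iff_X_pow_dvd_taylor {R : Type*} [CommRing R] (r : R) (m : ℕ)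
    (f : R[X]) : (X - C r) ^ m ∣ f ↔ X ^ m ∣ taylor r f := by
  rw [← map_dvd_iff (taylorEquiv r), map_pow, map_sub]
  change (taylor r X - taylor r (C r)) ^ m ∣ taylor r f ↔ _
  rw [taylor_X, taylor_C, add_sub_cancel_right]

theorem coeff_taylor_one_sum_X_pow_sub_C {R ι : Type*} [CommRing R] (s : Finset ι) (e : ι → ℕ)
    (c : R) (i : ℕ) :
    (taylor 1 (∑ j ∈ s, X ^ e j - C c)).coeff i =
      ∑ j ∈ s, ((e j).choose i : R) - if i = 0 then c else 0 := by
  simp only [map_sub, map_sum, taylor_X_pow, taylor_C, coeff_sub, finsetSum_coeff, map_one,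
    coeff_X_add_one_pow, coeff_C]

theorem orderOf_natCast_eq_orderOf_zmod {R : Type*} [Ring R] [Nontrivial R] {ℓ : ℕ}
    [Fact ℓ.Prime] [CharP R ℓ] (m : ℕ) : orderOf (m : R) = orderOf (m : ZMod ℓ) := by
  simpa using orderOf_injective (ZMod.castHom dvd_rfl R).toMonoidHom
    (ZMod.castHom dvd_rfl R).injective (m : ZMod ℓ)

section OrderOf

variable {R : Type*} [CommRing R] [IsDomain R] {Q : R} {n : ℕ}

theorem sum_range_pow_pow_of_orderOf (hQ : orderOf Q = n) (m : ℕ) :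
    ∑ j ∈ range n, (Q ^ m) ^ j = if n ∣ m then (n : R) else 0 := by
  split_ifs with hnm
  · simp [orderOf_dvd_iff_pow_eq_one.mp (hQ ▸ hnm)]
  · have hne : Q ^ m ≠ 1 := fun h => hnm (hQ ▸ orderOf_dvd_of_pow_eq_one h)
    refine eq_zero_of_ne_zero_of_mul_left_eq_zero (sub_ne_zero_of_ne hne) ?_
    rw [mul_geom_sum, ← pow_mul, mul_comm, pow_mul, ← hQ, pow_orderOf_eq_one, one_pow, sub_self]

theorem sum_range_eval_pow_of_orderOf (hQ : orderOf Q = n) (hn : 0 < n) {p : R[X]}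
    (hp : p.natDegree ≤ n) :
    ∑ j ∈ range n, p.eval (Q ^ j) = n * (p.coeff 0 + p.coeff n) := by
  calc ∑ j ∈ range n, p.eval (Q ^ j)
      = ∑ j ∈ range n, ∑ m ∈ range (n + 1), p.coeff m * (Q ^ m) ^ j := by
        refine sum_congr rfl fun j _ => ?_
        simp_rw [← pow_mul, mul_comm _ j, pow_mul]
        exact eval_eq_sum_range' (by omega) _
    _ = ∑ m ∈ range (n + 1), p.coeff m * if n ∣ m then (n : R) else 0 := by
        rw [sum_comm]
        simp_rw [← mul_sum, sum_range_pow_pow_of_orderOf hQ]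
    _ = n * (p.coeff 0 + p.coeff n) := by
        rw [sum_eq_add_of_mem 0 n (by simp) (by simp) hn.ne]
        · simp [mul_comm, mul_add]
        · intro m hm ⟨hm0, hmn⟩
          have hmlt : m < n := by have := mem_range.mp hm; omega
          rw [if_neg (Nat.not_dvd_of_pos_of_lt (by omega) hmlt), mul_zero]

theorem sum_range_eval_descPochhammer_pow_of_orderOf (hQ : orderOf Q = n) {i : ℕ} (hi : 0 < i)
    (hin : i ≤ n) :
    ∑ j ∈ range n, (descPochhammer R i).eval (Q ^ j) = if i = n then (n : R) else 0 := by
  have hcoeff0 : (descPochhammer R i).coeff 0 = 0 := by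
    rw [coeff_zero_eq_eval_zero, descPochhammer_eval_zero, if_neg hi.ne']
  rw [sum_range_eval_pow_of_orderOf hQ (by omega) (by rw [descPochhammer_natDegree]; exact hin),
    hcoeff0, zero_add]
  split_ifs with h
  · have hlead := (monic_descPochhammer R i).coeff_natDegree
    rw [descPochhammer_natDegree, h] at hlead
    rw [h, hlead, mul_one]
  · rw [coeff_eq_zero_of_natDegree_lt (by rw [descPochhammer_natDegree]; omega), mul_zero]

theorem factorial_mul_sum_range_choose_pow (q : ℕ) (hQ : orderOf (q : R) = n) {i : ℕ}
    (hi : 0 < i) (hin : i ≤ n) :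
    (i ! : R) * ∑ j ∈ range n, ((q ^ j).choose i : R) = if i = n then (n : R) else 0 := by
  rw [← sum_range_eval_descPochhammer_pow_of_orderOf hQ hi hin, mul_sum]
  refine sum_congr rfl fun j _ => ?_
  rw [← Nat.cast_pow, descPochhammer_eval_eq_descFactorial, descFactorial_eq_factorial_mul_choose,
    Nat.cast_mul]

end OrderOf

open Polynomial in
theorem stmt_7_general (ℓ q n : ℕ) (hℓ : ℓ.Prime)
    (hn : orderOf (q : ZMod ℓ) = n) (h2n : 2 ≤ n) (hnℓ : n < ℓ)
    (k : Type*) [Field k] (hchar : CharP k ℓ) :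
    ((X : k[X]) - 1) ^ n ∣ (∑ j ∈ Finset.range n, (X : k[X]) ^ q ^ j - C (n : k)) ∧
    ¬ ((X : k[X]) - 1) ^ (n + 1) ∣ (∑ j ∈ Finset.range n, (X : k[X]) ^ q ^ j - C (n : k)) := by
  have : Fact ℓ.Prime := ⟨hℓ⟩
  have hQ : orderOf (q : k) = n := (orderOf_natCast_eq_orderOf_zmod q).trans hn
  have hfact : ∀ i ≤ n, (i ! : k) ≠ 0 := fun i hi hzero =>
    absurd (hℓ.dvd_factorial.mp ((CharP.cast_eq_zero_iff k ℓ _).mp hzero)) (by omega)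
  have hn0 : (n : k) ≠ 0 := fun hzero =>
    Nat.not_dvd_of_pos_of_lt (by omega) hnℓ ((CharP.cast_eq_zero_iff k ℓ _).mp hzero)
  rw [← C_1, X_sub_C_pow_dvd_iff_X_pow_dvd_taylor, X_sub_C_pow_dvd_iff_X_pow_dvd_taylor,
    X_pow_dvd_iff, X_pow_dvd_iff]
  simp only [coeff_taylor_one_sum_X_pow_sub_C]
  constructor
  · intro i hi
    rcases Nat.eq_zero_or_pos i with rfl | hi0
    · simp
    · have hsum := factorial_mul_sum_range_choose_pow q hQ hi0 hi.le
      rw [if_neg hi.ne] at hsum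
      rw [(mul_eq_zero.mp hsum).resolve_left (hfact i hi.le), if_neg hi0.ne', sub_zero]
  · intro hvanish
    have hsum := factorial_mul_sum_range_choose_pow q hQ (by omega) le_rfl
    have hcoeff := hvanish n n.lt_succ_self
    rw [if_neg (by omega), sub_zero] at hcoeff
    rw [if_pos rfl, hcoeff, mul_zero] at hsum
    exact hn0 hsum.symm

open Polynomial in
theorem stmt_7 (ℓ q n r : ℕ) (hℓ : ℓ.Prime) (hq : IsPrimePow q) (hndvd : ¬ ℓ ∣ q)
    (hn : orderOf (q : ZMod ℓ) = n) (h2n : 2 ≤ n) (hnℓ : n < ℓ)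
    (hr : r = padicValNat ℓ (q ^ n - 1))
    (k : Type*) [Field k] [Fintype k] (hchar : CharP k ℓ) :
    ((X : k[X]) - 1) ^ n ∣ (∑ j ∈ Finset.range n, (X : k[X]) ^ q ^ j - C (n : k)) ∧
    ¬ ((X : k[X]) - 1) ^ (n + 1) ∣ (∑ j ∈ Finset.range n, (X : k[X]) ^ q ^ j - C (n : k)) :=
  stmt_7_general ℓ q n hℓ hn h2n hnℓ k hchar
end

section
/- Let $\ell$ be an odd prime and $q$ a prime power whose multiplicative order modulo $\ell$ is $n = \ell - 1$. Then the $(n+1)$-st derivative of $g(X) = X + X^q + \cdots + X^{q^{n-1}} - n$, evaluated at $X = 1$, is nonzero modulo $\ell$. Explicitly, $\sum_{j=1}^{n-1} q^j(q^j-1)(q^j-2)\cdots(q^j-(n-1)) \not\equiv 0 \pmod \ell$. -/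
/-!
Reduce modulo `ℓ`. Since `q` is a primitive `(ℓ - 1)`-th root of unity in `ZMod ℓ`, among
`q, q², …, q^(ℓ-2)` only `q^((ℓ-1)/2)` equals `-1`. Every other `q^j` is the residue of some
`i < ℓ - 1`, so its term `∏_{i < ℓ-1} (q^j - i)` contains a zero factor; the surviving term is
`∏_{i < ℓ-1} (-1 - i) = (ℓ - 1)! = -1` by Wilson's theorem.
-/

open Finset

namespace IsPrimitiveRoot

variable {R : Type*} [CommRing R] {ζ : R} {k : ℕ}

theorem pow_half_eq_neg_one [NoZeroDivisors R] (h : IsPrimitiveRoot ζ (2 * k)) (hk : 0 < k) :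
    ζ ^ k = -1 := by
  have h2 := h.pow_of_dvd hk.ne' (dvd_mul_left k 2)
  rw [Nat.mul_div_cancel _ hk] at h2
  exact h2.eq_neg_one_of_two_right

theorem eq_half_of_pow_eq_neg_one (h : IsPrimitiveRoot ζ (2 * k)) {j : ℕ} (hj₀ : 0 < j)
    (hj : j < 2 * k) (hζj : ζ ^ j = -1) : j = k := by
  have hdvd : 2 * k ∣ 2 * j := (h.pow_eq_one_iff_dvd _).1 (by rw [pow_mul', hζj, neg_one_sq])
  obtain ⟨c, rfl⟩ := Nat.dvd_of_mul_dvd_mul_left two_pos hdvd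
  rcases c with _ | _ | c
  · omega
  · ring
  · nlinarith

end IsPrimitiveRoot

namespace ZMod

theorem prod_range_sub_natCast_eq_zero {n : ℕ} [NeZero n] {x : ZMod n} (hx : x ≠ -1) :
    ∏ i ∈ range (n - 1), (x - i) = 0 := by
  have hval : x.val ≠ n - 1 := by
    intro hv
    apply hx
    rw [← natCast_zmod_val x, hv, Nat.cast_pred (NeZero.pos n), natCast_self, zero_sub]
  refine prod_eq_zero (i := x.val) (mem_range.2 (by have := x.val_lt; omega)) ?_
  rw [natCast_zmod_val, sub_self]

theorem prod_range_neg_one_sub_natCast (p : ℕ) [Fact p.Prime] :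
    ∏ i ∈ range (p - 1), (-1 - i : ZMod p) = -1 := by
  calc ∏ i ∈ range (p - 1), (-1 - i : ZMod p)
      = (-1) ^ (p - 1) * ∏ i ∈ range (p - 1), ((i + 1 : ℕ) : ZMod p) := by
        rw [← card_range (p - 1), ← prod_const, card_range, ← prod_mul_distrib]
        exact prod_congr rfl fun i _ => by push_cast; ring
    _ = -1 := by
        rw [pow_card_sub_one_eq_one (neg_ne_zero.2 one_ne_zero), one_mul, ← Nat.cast_prod,
          prod_range_add_one_eq_factorial, wilsons_lemma]

end ZMod

theorem stmt_8_general (ℓ q : ℕ) (hℓ : ℓ.Prime) (hℓodd : Odd ℓ)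
    (hn : orderOf (q : ZMod ℓ) = ℓ - 1) :
    ¬ (ℓ : ℤ) ∣ ∑ j ∈ Finset.Icc 1 (ℓ - 1 - 1),
        ∏ i ∈ Finset.range (ℓ - 1), ((q : ℤ) ^ j - (i : ℤ)) := by
  have : Fact ℓ.Prime := ⟨hℓ⟩
  obtain ⟨k, hk⟩ := hℓodd
  have hk₀ : 0 < k := by have := hℓ.two_le; omega
  have hζ : IsPrimitiveRoot (q : ZMod ℓ) (2 * k) := by
    rw [show 2 * k = ℓ - 1 by omega, ← hn]; exact IsPrimitiveRoot.orderOf _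
  rw [← ZMod.intCast_zmod_eq_zero_iff_dvd]
  push_cast
  rw [sum_eq_single_of_mem k (mem_Icc.2 (by omega)), hζ.pow_half_eq_neg_one hk₀,
    ZMod.prod_range_neg_one_sub_natCast]
  · exact neg_ne_zero.2 one_ne_zero
  · intro j hj hjk
    rw [mem_Icc] at hj
    exact ZMod.prod_range_sub_natCast_eq_zero
      fun h => hjk (hζ.eq_half_of_pow_eq_neg_one (by omega) (by omega) h)

theorem stmt_8 (ℓ q : ℕ) (hℓ : ℓ.Prime) (hℓodd : Odd ℓ) (hq : IsPrimePow q)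
    (hn : orderOf (q : ZMod ℓ) = ℓ - 1) :
    ¬ (ℓ : ℤ) ∣ ∑ j ∈ Finset.Icc 1 (ℓ - 1 - 1),
        ∏ i ∈ Finset.range (ℓ - 1), ((q : ℤ) ^ j - (i : ℤ)) :=
  stmt_8_general ℓ q hℓ hℓodd hn
end

section
/- Let $\ell$ be a prime, $q$ a prime power with multiplicative order $n$ modulo $\ell$, where $2 \leq n < \ell$, and let $r = \mathrm{ord}_\ell(q^n-1)$. Let $K = \mathbb{Q}_\ell$ (or an unramified extension), fix a primitive $\ell^i$-th root of unity $\zeta_i$ for $0 < i \leq r$, and set $\omega_i = \zeta_i + \zeta_i^q + \cdots + \zeta_i^{q^{n-1}}$. Then the fixed field $L_i$ of the subgroup of $\mathrm{Gal}(K(\zeta_i)/K)$ generated by (the automorphism corresponding to) $q$ satisfies $L_i = K(\omega_i)$, and moreover $\omega_i - n$ is a uniformizer of the ring of integers of $L_i$. -/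
/-!
Put `π = ζ - 1` and `S k = ∑_{j<n} C(q^j, k)`, so that `ω = ∑_k S k π^k` by the binomial theorem.
Evaluating the falling factorial of degree `k` at the powers of `q`, which have order `n` mod `ℓ`,
gives `k! S k ≡ 0` for `0 < k < n` and `n! S n ≡ n` mod `ℓ`. Since `N(π) = ℓ` and every conjugate
of `π` is a multiple of `π`, `π^φ(ℓ^i)` divides `ℓ`, and `n ≤ φ(ℓ^i)`; hence `ω - n = π^n u` with
`u ≡ S n` mod `π`. Then `N(u) ≡ (S n)^[L:K]` mod `π`, so `N(u)` is an `ℓ`-adic unit and so is `u`.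
Finally `N(ω - n) = ℓ^n N(u)` is the `[L : K(ω)]`-th power of `N_{K(ω)/K}(ω - n) ∈ K`, which
forces `[L : K(ω)] ≤ n = ord σ`; as `K(ω)` lies in the fixed field of `σ`, the two fields agree.
-/

open Finset Polynomial IntermediateField

theorem sum_pow_pow_eq_zero_of_lt_orderOf {R : Type*} [CommRing R] [IsDomain R] {x : R} {m : ℕ}
    (hm0 : m ≠ 0) (hm : m < orderOf x) :
    ∑ j ∈ range (orderOf x), (x ^ j) ^ m = 0 := by
  have hxm : x ^ m - 1 ≠ 0 := sub_ne_zero.2 (pow_ne_one_of_lt_orderOf hm0 hm)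
  refine (mul_eq_zero.1 ?_).resolve_left hxm
  simp_rw [← pow_mul, mul_comm _ m, pow_mul, mul_geom_sum, ← pow_mul, mul_comm m, pow_mul,
    pow_orderOf_eq_one, one_pow, sub_self]

theorem sum_eval_pow_eq_of_natDegree_le_orderOf {R : Type*} [CommRing R] [IsDomain R] {x : R}
    (hx : 0 < orderOf x) (f : R[X]) (hf : f.natDegree ≤ orderOf x) :
    ∑ j ∈ range (orderOf x), f.eval (x ^ j) = orderOf x * (f.coeff 0 + f.coeff (orderOf x)) := by
  set n := orderOf x
  have hvanish : ∀ m ∈ range (n + 1), m ≠ 0 ∧ m ≠ n →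
      f.coeff m * ∑ j ∈ range n, (x ^ j) ^ m = 0 := fun m hm ⟨h0, hn⟩ => by
    rw [sum_pow_pow_eq_zero_of_lt_orderOf h0 (by grind), mul_zero]
  have hxn : ∀ j, (x ^ j) ^ n = 1 := fun j => by
    rw [← pow_mul, mul_comm, pow_mul, pow_orderOf_eq_one, one_pow]
  simp_rw [eval_eq_sum_range' (Nat.lt_succ_of_le hf)]
  rw [sum_comm]
  simp_rw [← mul_sum]
  rw [sum_eq_add_of_mem 0 n (by simp) (by simp) hx.ne hvanish]
  simp only [pow_zero, hxn, sum_const, card_range, nsmul_one]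
  ring

def sumChoosePow (q n k : ℕ) : ℕ := ∑ j ∈ range n, (q ^ j).choose k

open Nat in
theorem factorial_mul_sumChoosePow {p q k : ℕ} [Fact p.Prime] (hk : k ≠ 0)
    (hkq : k ≤ orderOf (q : ZMod p)) :
    (k ! * sumChoosePow q (orderOf (q : ZMod p)) k : ZMod p) =
      if k = orderOf (q : ZMod p) then (orderOf (q : ZMod p) : ZMod p) else 0 := by
  have hdeg : (descPochhammer (ZMod p) k).natDegree = k := descPochhammer_natDegree _ k
  have hcoeff : (descPochhammer (ZMod p) k).coeff (orderOf (q : ZMod p)) =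
      if k = orderOf (q : ZMod p) then 1 else 0 := by
    split_ifs with h
    · rw [← h, ← (monic_descPochhammer (ZMod p) k).coeff_natDegree, hdeg]
    · exact coeff_eq_zero_of_natDegree_lt (by omega)
  have hterm : ∀ j, ((k ! * (q ^ j).choose k : ℕ) : ZMod p) =
      (descPochhammer (ZMod p) k).eval ((q : ZMod p) ^ j) := fun j => by
    rw [← descFactorial_eq_factorial_mul_choose, ← descPochhammer_eval_eq_descFactorial,
      Nat.cast_pow]
  rw [sumChoosePow, Nat.cast_sum, mul_sum]
  simp_rw [← Nat.cast_mul, hterm]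
  rw [sum_eval_pow_eq_of_natDegree_le_orderOf (by omega) _ (hdeg.trans_le hkq),
    coeff_zero_eq_eval_zero, descPochhammer_ne_zero_eval_zero _ hk, hcoeff]
  split_ifs <;> simp

theorem prime_dvd_sumChoosePow {p q k : ℕ} [Fact p.Prime] (hk : k ≠ 0)
    (hkq : k < orderOf (q : ZMod p)) (hkp : k < p) :
    p ∣ sumChoosePow q (orderOf (q : ZMod p)) k := by
  have h := factorial_mul_sumChoosePow hk hkq.le
  rw [if_neg hkq.ne, ((IsUnit.natCast_factorial_iff_of_charP p).2 hkp).mul_right_eq_zero] at h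
  exact (ZMod.natCast_eq_zero_iff _ _).1 h

theorem not_prime_dvd_sumChoosePow {p q : ℕ} [Fact p.Prime] (hq : 0 < orderOf (q : ZMod p))
    (hqp : orderOf (q : ZMod p) < p) :
    ¬ p ∣ sumChoosePow q (orderOf (q : ZMod p)) (orderOf (q : ZMod p)) := by
  intro hdvd
  have h := factorial_mul_sumChoosePow hq.ne' le_rfl
  rw [if_pos rfl, (ZMod.natCast_eq_zero_iff _ _).2 hdvd, mul_zero, eq_comm,
    ZMod.natCast_eq_zero_iff] at h
  exact absurd (Nat.le_of_dvd hq h) (by omega)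

theorem one_add_pow_eq_sum_of_pow_eq_zero {R : Type*} [CommRing R] {x : R} {N : ℕ}
    (hx : x ^ N = 0) (m : ℕ) : (1 + x) ^ m = ∑ k ∈ range N, (m.choose k : R) * x ^ k := by
  calc (1 + x) ^ m = ∑ k ∈ range (m + 1), (m.choose k : R) * x ^ k := by
        rw [add_comm, add_pow]; simp [mul_comm]
    _ = ∑ k ∈ range (m + 1 + N), (m.choose k : R) * x ^ k :=
        sum_subset (range_subset_range.2 (Nat.le_add_right _ _)) fun k _ hk => by
          rw [Nat.choose_eq_zero_of_lt (by simpa using hk), Nat.cast_zero, zero_mul]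
    _ = ∑ k ∈ range N, (m.choose k : R) * x ^ k :=
        (sum_subset (range_subset_range.2 (Nat.le_add_left _ _)) fun k _ hk => by
          rw [pow_eq_zero_of_le (by simpa using hk) hx, mul_zero]).symm

theorem sum_one_add_pow_pow_eq {R : Type*} [CommRing R] {x : R} {p q n : ℕ}
    (hx : x ^ (n + 1) = 0) (hpx : (p : R) * x = 0)
    (hS : ∀ k, k ≠ 0 → k < n → p ∣ sumChoosePow q n k) :
    ∑ j ∈ range n, (1 + x) ^ q ^ j = n + sumChoosePow q n n * x ^ n := by
  have hcoeff : ∀ k, ∑ j ∈ range n, ((q ^ j).choose k : R) * x ^ k = sumChoosePow q n k * x ^ k :=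
    fun k => by rw [sumChoosePow, Nat.cast_sum, sum_mul]
  simp_rw [one_add_pow_eq_sum_of_pow_eq_zero hx]
  rw [sum_comm]
  simp_rw [hcoeff]
  rw [sum_range_succ, sum_eq_single 0]
  · simp [sumChoosePow]
  · intro k hk hk0
    obtain ⟨c, hc⟩ := hS k hk0 (mem_range.1 hk)
    obtain ⟨k, rfl⟩ := Nat.exists_eq_succ_of_ne_zero hk0
    rw [hc, Nat.cast_mul, pow_succ']
    linear_combination (c * x ^ k : R) * hpx
  · intro h0
    simp [sumChoosePow, show n = 0 by simpa using h0]

theorem exists_sum_one_add_pow_pow_sub_eq {R : Type*} [CommRing R] {π : R} {p q n : ℕ}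
    (hπ : π ^ n ∣ (p : R)) (hS : ∀ k, k ≠ 0 → k < n → p ∣ sumChoosePow q n k) :
    ∃ y, ∑ j ∈ range n, (1 + π) ^ q ^ j - n = π ^ n * (sumChoosePow q n n + π * y) := by
  let I := Ideal.span {π ^ (n + 1)}
  have hπI : (Ideal.Quotient.mk I π) ^ (n + 1) = 0 := by
    rw [← map_pow, Ideal.Quotient.eq_zero_iff_mem]
    exact Ideal.mem_span_singleton_self _
  have hpπI : (p : R ⧸ I) * Ideal.Quotient.mk I π = 0 := by
    obtain ⟨c, hc⟩ := hπ
    rw [← map_natCast (Ideal.Quotient.mk I), ← map_mul, Ideal.Quotient.eq_zero_iff_mem, hc,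
      Ideal.mem_span_singleton]
    exact ⟨c, by ring⟩
  have h := sum_one_add_pow_pow_eq hπI hpπI hS
  simp only [← map_one (Ideal.Quotient.mk I), ← map_add, ← map_pow, ← map_sum,
    ← map_natCast (Ideal.Quotient.mk I), ← map_mul] at h
  obtain ⟨y, hy⟩ := Ideal.mem_span_singleton.1 (Ideal.Quotient.eq.1 h)
  exact ⟨y, by linear_combination hy⟩

theorem natCast_zmod_prime_pow_eq_one {p a i : ℕ} [Fact p.Prime] (hi : i ≠ 0)
    (h : i ≤ padicValNat p (a - 1)) : (a : ZMod (p ^ i)) = 1 := by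
  have ha : 1 ≤ a := by
    by_contra! ha
    rw [Nat.lt_one_iff.1 ha, zero_tsub, padicValNat_zero_right] at h
    omega
  have hdvd := (ZMod.natCast_eq_zero_iff _ _).2 ((pow_dvd_pow p h).trans pow_padicValNat_dvd)
  rwa [Nat.cast_sub ha, Nat.cast_one, sub_eq_zero] at hdvd

theorem orderOf_natCast_zmod_eq_of_dvd {m M q : ℕ} (hmM : m ∣ M)
    (hq : (q : ZMod M) ^ orderOf (q : ZMod m) = 1) :
    orderOf (q : ZMod M) = orderOf (q : ZMod m) :=
  Nat.dvd_antisymm (orderOf_dvd_of_pow_eq_one hq) (by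
    simpa using orderOf_map_dvd (ZMod.castHom hmM (ZMod m)).toMonoidHom (q : ZMod M))

theorem IsPrimitiveRoot.pow_eq_pow_iff_natCast_eq {M : Type*} [CommMonoid M] {ζ : M} {N : ℕ}
    [NeZero N] (hζ : IsPrimitiveRoot ζ N) {a b : ℕ} : ζ ^ a = ζ ^ b ↔ (a : ZMod N) = b := by
  rw [ZMod.natCast_eq_natCast_iff, hζ.eq_orderOf]
  exact (hζ.isOfFinOrder (NeZero.ne N)).pow_eq_pow_iff_modEq

theorem IsCyclotomicExtension.of_adjoin_eq_top {K L : Type*} [Field K] [Field L] [Algebra K L]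
    {N : ℕ} [NeZero N] {ζ : L} (hζ : IsPrimitiveRoot ζ N) (hL : K⟮ζ⟯ = ⊤) :
    IsCyclotomicExtension {N} K L :=
  have := (IntermediateField.isCyclotomicExtension_singleton_iff_eq_adjoin _ _ _ ⊤ hζ).2 hL.symm
  IsCyclotomicExtension.equiv _ _ _ IntermediateField.topEquiv

theorem IsPrimitiveRoot.orderOf_algEquiv_eq_orderOf_zmod {K L : Type*} [Field K] [Field L]
    [Algebra K L] {N : ℕ} [NeZero N] [IsCyclotomicExtension {N} K L] {ζ : L}
    (hζ : IsPrimitiveRoot ζ N) {σ : L ≃ₐ[K] L} {q : ℕ} (hσ : σ ζ = ζ ^ q) :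
    orderOf σ = orderOf (q : ZMod N) := by
  have hpow : ∀ k, (σ ^ k) ζ = ζ ^ q ^ k := fun k => by
    induction k with
    | zero => simp
    | succ k ih => rw [pow_succ, AlgEquiv.mul_apply, hσ, map_pow, ih, ← pow_mul, ← pow_succ]
  have hfix : ∀ τ : L ≃ₐ[K] L, τ = 1 ↔ τ ζ = ζ := fun τ =>
    ⟨fun h => by rw [h, AlgEquiv.one_apply], fun h =>
      IsCyclotomicExtension.algEquiv_eq_of_apply_eq {N} K L fun n hn _ =>
        ⟨ζ, Set.mem_singleton_iff.1 hn ▸ hζ, by rwa [AlgEquiv.one_apply]⟩⟩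
  rw [orderOf_eq_orderOf_iff]
  intro k
  rw [hfix, hpow, ← Nat.cast_pow, ← Nat.cast_one]
  nth_rewrite 2 [← pow_one ζ]
  exact hζ.pow_eq_pow_iff_natCast_eq

theorem Finset.sum_range_succ_shift_of_eq {M : Type*} [AddCommGroup M] {f : ℕ → M} {n : ℕ}
    (h : f n = f 0) : ∑ j ∈ range n, f (j + 1) = ∑ j ∈ range n, f j := by
  have h₁ := sum_range_succ f n
  rw [sum_range_succ', h] at h₁
  exact add_right_cancel h₁

theorem map_sum_pow_pow_eq_self {R F : Type*} [CommRing R] [FunLike F R R] [RingHomClass F R R]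
    (σ : F) {ζ : R} {q n : ℕ} (hσ : σ ζ = ζ ^ q) (hζ : ζ ^ q ^ n = ζ) :
    σ (∑ j ∈ range n, ζ ^ q ^ j) = ∑ j ∈ range n, ζ ^ q ^ j := by
  simp_rw [map_sum, map_pow, hσ, ← pow_mul, ← pow_succ']
  exact sum_range_succ_shift_of_eq (f := fun j => ζ ^ q ^ j) (by rwa [pow_zero, pow_one])

theorem IntermediateField.fixedField_zpowers_eq_adjoin_of_finrank_le {K L : Type*} [Field K]
    [Field L] [Algebra K L] [FiniteDimensional K L] {σ : L ≃ₐ[K] L} {x : L} (hx : σ x = x)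
    (h : Module.finrank K⟮x⟯ L ≤ orderOf σ) :
    fixedField (Subgroup.zpowers σ) = K⟮x⟯ := by
  refine (eq_of_le_of_finrank_le' ?_ ?_).symm
  · rw [adjoin_simple_le_iff]
    rintro ⟨τ, hτ⟩
    obtain ⟨k, rfl⟩ := Subgroup.mem_zpowers_iff.1 hτ
    exact (MulAction.mem_stabilizer_iff (G := L ≃ₐ[K] L)).1
      (Subgroup.zpow_mem _ (MulAction.mem_stabilizer_iff.2 hx) k)
  · rwa [finrank_fixedField_eq_card, Nat.card_zpowers]

theorem cyclotomic_comp_X_add_one_isEisensteinAt_padicInt (p k : ℕ) [Fact p.Prime] :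
    ((cyclotomic (p ^ (k + 1)) ℤ_[p]).comp (X + 1)).IsEisensteinAt
      (Ideal.span {(p : ℤ_[p])}) := by
  have hE := cyclotomic_prime_pow_comp_X_add_one_isEisensteinAt p k
  have hmap : (cyclotomic (p ^ (k + 1)) ℤ_[p]).comp (X + 1) =
      ((cyclotomic (p ^ (k + 1)) ℤ).comp (X + 1)).map (Int.castRingHom ℤ_[p]) := by
    simp [map_comp]
  have hmonic : ((cyclotomic (p ^ (k + 1)) ℤ_[p]).comp (X + 1)).Monic := by
    simpa using (cyclotomic.monic _ ℤ_[p]).comp_X_add_C 1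
  have hp : ¬IsUnit (p : ℤ_[p]) := PadicInt.prime_p.not_isUnit
  refine ⟨?_, fun hn => ?_, ?_⟩
  · rw [hmonic.leadingCoeff]
    exact fun h => hp (isUnit_of_dvd_one (Ideal.mem_span_singleton.1 h))
  · rw [hmap] at hn ⊢
    simpa [Ideal.map_span] using (hE.isWeaklyEisensteinAt.map (Int.castRingHom ℤ_[p])).mem hn
  · rw [coeff_zero_eq_eval_zero, eval_comp]
    simp only [eval_add, eval_X, eval_one, zero_add, eval_one_cyclotomic_prime_pow]
    rw [Ideal.span_singleton_pow, Ideal.mem_span_singleton, sq]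
    rintro ⟨c, hc⟩
    refine hp (.of_mul_eq_one c (mul_left_cancel₀ (PadicInt.prime_p.ne_zero) ?_))
    rw [mul_one, ← mul_assoc, ← hc]

theorem cyclotomic_prime_pow_irreducible_padic {p k : ℕ} [Fact p.Prime] (hk : k ≠ 0) :
    Irreducible (cyclotomic (p ^ k) ℚ_[p]) := by
  obtain ⟨k, rfl⟩ := Nat.exists_eq_succ_of_ne_zero hk
  have hmonic : ((cyclotomic (p ^ (k + 1)) ℤ_[p]).comp (X + 1)).Monic := by
    simpa using (cyclotomic.monic _ ℤ_[p]).comp_X_add_C 1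
  have hdeg : 0 < ((cyclotomic (p ^ (k + 1)) ℤ_[p]).comp (X + 1)).natDegree := by
    rw [natDegree_comp, natDegree_cyclotomic, ← C_1, natDegree_X_add_C, mul_one]
    exact Nat.totient_pos.2 (pow_pos (Fact.out : p.Prime).pos _)
  have hirr := (cyclotomic_comp_X_add_one_isEisensteinAt_padicInt p k).irreducible
    ((Ideal.span_singleton_prime PadicInt.prime_p.ne_zero).2 PadicInt.prime_p) hmonic.isPrimitive
    hdeg
  rw [hmonic.irreducible_iff_irreducible_map_fraction_map (K := ℚ_[p])] at hirr
  have hcomp : ((cyclotomic (p ^ (k + 1)) ℤ_[p]).comp (X + 1)).map (algebraMap ℤ_[p] ℚ_[p]) =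
      algEquivAevalXAddC (1 : ℚ_[p]) (cyclotomic (p ^ (k + 1)) ℚ_[p]) := by
    rw [map_comp, map_cyclotomic]
    simp [algEquivAevalXAddC, comp_eq_aeval]
  rw [hcomp] at hirr
  exact (MulEquiv.irreducible_iff (algEquivAevalXAddC (1 : ℚ_[p]))).1 hirr

theorem PadicInt.valuation_of_isUnit {p : ℕ} [Fact p.Prime] {w : ℤ_[p]} (hw : IsUnit w) :
    w.valuation = 0 := by
  obtain ⟨v, hv⟩ := hw.exists_right_inv
  have h := congrArg valuation hv
  rw [valuation_mul hw.ne_zero (right_ne_zero_of_mul_eq_one hv), valuation_one] at h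
  omega

theorem Padic.le_of_pow_eq_p_pow_mul_unit {p : ℕ} [Fact p.Prime] {x : ℚ_[p]} {w : ℤ_[p]}
    {e n : ℕ} (hw : IsUnit w) (hn : n ≠ 0) (h : x ^ e = ((p ^ n * w : ℤ_[p]) : ℚ_[p])) :
    e ≤ n := by
  have hv := congrArg Padic.valuation h
  rw [Padic.valuation_pow, PadicInt.valuation_coe, PadicInt.valuation_p_pow_mul _ _ hw.ne_zero,
    PadicInt.valuation_of_isUnit hw, add_zero] at hv
  have : 0 < x.valuation := by
    by_contra! h0
    have : (e : ℤ) * x.valuation ≤ 0 := mul_nonpos_of_nonneg_of_nonpos (by positivity) h0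
    omega
  nlinarith

theorem IntermediateField.finrank_le_of_norm_eq_p_pow_mul_unit {p : ℕ} [Fact p.Prime] {L : Type*} [Field L]
    [Algebra ℚ_[p] L] [FiniteDimensional ℚ_[p] L] (F : IntermediateField ℚ_[p] L) {x : L}
    (hx : x ∈ F) {w : ℤ_[p]} (hw : IsUnit w) {n : ℕ} (hn : n ≠ 0)
    (h : Algebra.norm ℚ_[p] x = ((p ^ n * w : ℤ_[p]) : ℚ_[p])) : Module.finrank F L ≤ n := by
  refine Padic.le_of_pow_eq_p_pow_mul_unit (x := Algebra.norm ℚ_[p] (⟨x, hx⟩ : F)) hw hn ?_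
  rw [← h, ← map_pow, ← Algebra.norm_algebraMap, Algebra.norm_norm]
  rfl

theorem IsLocalRing.dvd_algebraMap_iff_not_isUnit {A B : Type*} [CommRing A] [IsLocalRing A]
    [CommRing B] [Algebra A B] {π : B} (hπ : ¬IsUnit π)
    (h : ∀ a ∈ IsLocalRing.maximalIdeal A, π ∣ algebraMap A B a) {a : A} :
    π ∣ algebraMap A B a ↔ ¬IsUnit a :=
  ⟨fun ha hu => hπ (isUnit_of_dvd_unit ha (hu.map _)), fun ha => h a ha⟩

section IntNorm

variable {A B : Type*} [CommRing A] [IsDomain A] [IsIntegrallyClosed A] [CommRing B] [IsDomain B]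
  [IsIntegrallyClosed B] [Algebra A B] [Module.Finite A B] [Module.IsTorsionFree A B]

theorem Algebra.isUnit_intNorm_iff {x : B} : IsUnit (Algebra.intNorm A B x) ↔ IsUnit x :=
  ⟨fun h => isUnit_of_dvd_unit (Algebra.dvd_algebraMap_intNorm_self A B x) (h.map _),
    fun h => h.map _⟩

variable (K L : Type*) [Field K] [Field L] [Algebra A K] [IsFractionRing A K] [Algebra K L]
  [Algebra A L] [IsScalarTower A K L] [Algebra B L] [IsScalarTower A B L]
  [IsIntegralClosure B A L] [FiniteDimensional K L] [IsGalois K L]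

theorem Algebra.algebraMap_intNorm_eq_prod_galRestrict (x : B) :
    algebraMap A B (Algebra.intNorm A B x) = ∏ σ : Gal(L/K), galRestrict A K L B σ x := by
  rw [prod_galRestrict_eq_norm]
  congr 1
  apply IsFractionRing.injective A K
  rw [Algebra.algebraMap_intNorm (L := L), IsIntegralClosure.algebraMap_mk']

theorem Algebra.pow_finrank_dvd_algebraMap_intNorm {x : B} (hx : ∀ σ : B ≃ₐ[A] B, x ∣ σ x) :
    x ^ Module.finrank K L ∣ algebraMap A B (Algebra.intNorm A B x) := by
  rw [Algebra.algebraMap_intNorm_eq_prod_galRestrict K L, ← IsGalois.card_aut_eq_finrank,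
    ← Fintype.card_eq_nat_card, ← Finset.card_univ, ← Finset.prod_const]
  exact Finset.prod_dvd_prod_of_dvd _ _ fun σ _ => hx _

theorem Algebra.dvd_algebraMap_intNorm_sub_pow {π x : B} {a : A}
    (hπ : ∀ σ : B ≃ₐ[A] B, π ∣ σ π) (hx : π ∣ x - algebraMap A B a) :
    π ∣ algebraMap A B (Algebra.intNorm A B x) - algebraMap A B a ^ Module.finrank K L := by
  have hσ : ∀ σ : B ≃ₐ[A] B, Ideal.Quotient.mk (Ideal.span {π}) (σ x) =
      Ideal.Quotient.mk (Ideal.span {π}) (algebraMap A B a) := fun σ => by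
    rw [Ideal.Quotient.eq, Ideal.mem_span_singleton, ← σ.commutes, ← map_sub]
    obtain ⟨c, hc⟩ := hx
    rw [hc, map_mul]
    exact (hπ σ).mul_right _
  rw [← Ideal.mem_span_singleton, ← Ideal.Quotient.eq,
    Algebra.algebraMap_intNorm_eq_prod_galRestrict K L, map_prod, map_pow]
  simp_rw [hσ]
  rw [Finset.prod_const, Finset.card_univ, Fintype.card_eq_nat_card, IsGalois.card_aut_eq_finrank]

end IntNorm

section IntegralClosure

variable {ℓ : ℕ} [hℓ : Fact ℓ.Prime] {L : Type*} [Field L] [Algebra ℚ_[ℓ] L] [Algebra ℤ_[ℓ] L]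
  [IsScalarTower ℤ_[ℓ] ℚ_[ℓ] L] [FiniteDimensional ℚ_[ℓ] L]

instance : IsIntegrallyClosed (integralClosure ℤ_[ℓ] L) :=
  integralClosure.isIntegrallyClosedOfFiniteExtension ℚ_[ℓ]

instance : Module.Finite ℤ_[ℓ] (integralClosure ℤ_[ℓ] L) :=
  IsIntegralClosure.finite ℤ_[ℓ] ℚ_[ℓ] L _

instance : Module.IsTorsionFree ℤ_[ℓ] (integralClosure ℤ_[ℓ] L) := by
  refine Module.isTorsionFree_iff_algebraMap_injective.2
    (.of_comp (f := algebraMap (integralClosure ℤ_[ℓ] L) L) ?_)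
  rw [← RingHom.coe_comp, ← IsScalarTower.algebraMap_eq, IsScalarTower.algebraMap_eq ℤ_[ℓ] ℚ_[ℓ] L,
    RingHom.coe_comp]
  exact (algebraMap ℚ_[ℓ] L).injective.comp (IsFractionRing.injective ℤ_[ℓ] ℚ_[ℓ])

variable {k : ℕ} [IsCyclotomicExtension {ℓ ^ k} ℚ_[ℓ] L] {ζ : integralClosure ℤ_[ℓ] L}

theorem IsPrimitiveRoot.intNorm_sub_one (hζ : IsPrimitiveRoot ζ (ℓ ^ k)) (hk : k ≠ 0)
    (hℓ2 : ℓ ≠ 2) : Algebra.intNorm ℤ_[ℓ] (integralClosure ℤ_[ℓ] L) (ζ - 1) = ℓ := by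
  have hp := hℓ.out
  have : NeZero (ℓ ^ k) := ⟨pow_ne_zero _ hp.ne_zero⟩
  have hζL := hζ.map_of_injective
    (IsIntegralClosure.algebraMap_injective (integralClosure ℤ_[ℓ] L) ℤ_[ℓ] L)
  apply IsFractionRing.injective ℤ_[ℓ] ℚ_[ℓ]
  rw [Algebra.algebraMap_intNorm (L := L), map_sub, map_one, map_natCast,
    hζL.sub_one_norm_isPrimePow ⟨ℓ, k, hp.prime, Nat.pos_of_ne_zero hk, rfl⟩
      (cyclotomic_prime_pow_irreducible_padic hk)
      fun h => hℓ2 ((Nat.prime_dvd_prime_iff_eq hp Nat.prime_two).1 (h ▸ dvd_pow_self ℓ hk)),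
    hp.pow_minFac hk]

theorem IsPrimitiveRoot.sub_one_pow_totient_dvd (hζ : IsPrimitiveRoot ζ (ℓ ^ k)) (hk : k ≠ 0)
    (hℓ2 : ℓ ≠ 2) : (ζ - 1) ^ (ℓ ^ k).totient ∣ (ℓ : integralClosure ℤ_[ℓ] L) := by
  have : NeZero (ℓ ^ k) := ⟨pow_ne_zero _ hℓ.out.ne_zero⟩
  have := IsCyclotomicExtension.isGalois {ℓ ^ k} ℚ_[ℓ] L
  have h := Algebra.pow_finrank_dvd_algebraMap_intNorm (A := ℤ_[ℓ]) ℚ_[ℓ] L (x := ζ - 1)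
    fun σ => (hζ.associated_sub_one_map_sub_one σ).dvd
  rwa [IsCyclotomicExtension.finrank L (cyclotomic_prime_pow_irreducible_padic hk),
    hζ.intNorm_sub_one hk hℓ2, map_natCast] at h

theorem IsPrimitiveRoot.sub_one_dvd_algebraMap_iff (hζ : IsPrimitiveRoot ζ (ℓ ^ k)) (hk : k ≠ 0)
    (hℓ2 : ℓ ≠ 2) {a : ℤ_[ℓ]} :
    ζ - 1 ∣ algebraMap ℤ_[ℓ] (integralClosure ℤ_[ℓ] L) a ↔ ¬IsUnit a := by
  have hζ1 : ¬IsUnit (ζ - 1) := by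
    rw [← Algebra.isUnit_intNorm_iff (A := ℤ_[ℓ]) (x := ζ - 1), hζ.intNorm_sub_one hk hℓ2]
    exact PadicInt.prime_p.not_isUnit
  refine IsLocalRing.dvd_algebraMap_iff_not_isUnit hζ1 fun a ha => ?_
  rw [PadicInt.maximalIdeal_eq_span_p, Ideal.mem_span_singleton] at ha
  obtain ⟨b, rfl⟩ := ha
  rw [map_mul, map_natCast]
  have hφ : (ℓ ^ k).totient ≠ 0 := (Nat.totient_pos.2 (pow_pos hℓ.out.pos k)).ne'
  exact ((dvd_pow_self _ hφ).trans (hζ.sub_one_pow_totient_dvd hk hℓ2)).mul_right _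

theorem IsPrimitiveRoot.exists_unit_sum_pow_pow_sub_eq (hζ : IsPrimitiveRoot ζ (ℓ ^ k))
    (hk : k ≠ 0) (hℓ2 : ℓ ≠ 2) {q n : ℕ} (hq : orderOf (q : ZMod ℓ) = n) (hn : n ≠ 0)
    (hnℓ : n < ℓ) :
    ∃ u : (integralClosure ℤ_[ℓ] L)ˣ, ∑ j ∈ range n, ζ ^ q ^ j - n = (ζ - 1) ^ n * u := by
  have hp := hℓ.out
  have : NeZero (ℓ ^ k) := ⟨pow_ne_zero _ hp.ne_zero⟩
  have := IsCyclotomicExtension.isGalois {ℓ ^ k} ℚ_[ℓ] L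
  subst hq
  have hnφ : orderOf (q : ZMod ℓ) ≤ (ℓ ^ k).totient := by
    rw [Nat.totient_prime_pow hp (Nat.pos_of_ne_zero hk)]
    exact (Nat.le_sub_one_of_lt hnℓ).trans (Nat.le_mul_of_pos_left _ (pow_pos hp.pos _))
  obtain ⟨y, hy⟩ := exists_sum_one_add_pow_pow_sub_eq (π := ζ - 1) (q := q)
    ((pow_dvd_pow _ hnφ).trans (hζ.sub_one_pow_totient_dvd hk hℓ2))
    fun j hj0 hj => prime_dvd_sumChoosePow hj0 hj (hj.trans hnℓ)
  simp only [add_sub_cancel] at hy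
  set S := sumChoosePow q (orderOf (q : ZMod ℓ)) (orderOf (q : ZMod ℓ))
  have hS : IsUnit (S : ℤ_[ℓ]) := PadicInt.isUnit_iff.2 (PadicInt.norm_natCast_eq_one_iff.2
    ((Nat.Prime.coprime_iff_not_dvd hp).2
      (not_prime_dvd_sumChoosePow (Nat.pos_of_ne_zero hn) hnℓ)))
  have hu : IsUnit (Algebra.intNorm ℤ_[ℓ] (integralClosure ℤ_[ℓ] L) (S + (ζ - 1) * y)) := by
    have h := Algebra.dvd_algebraMap_intNorm_sub_pow ℚ_[ℓ] L (x := S + (ζ - 1) * y)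
      (a := (S : ℤ_[ℓ])) (fun σ => (hζ.associated_sub_one_map_sub_one σ).dvd)
      (by rw [map_natCast, add_sub_cancel_left]; exact dvd_mul_right _ _)
    by_contra hN
    rw [← hζ.sub_one_dvd_algebraMap_iff hk hℓ2] at hN
    have h' := dvd_sub hN h
    rw [sub_sub_cancel, ← map_pow, hζ.sub_one_dvd_algebraMap_iff hk hℓ2] at h'
    exact h' (hS.pow _)
  exact ⟨(Algebra.isUnit_intNorm_iff.1 hu).unit, hy⟩

theorem IsPrimitiveRoot.norm_sub_one_pow_mul (hζ : IsPrimitiveRoot ζ (ℓ ^ k)) (hk : k ≠ 0)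
    (hℓ2 : ℓ ≠ 2) (n : ℕ) (u : integralClosure ℤ_[ℓ] L) :
    Algebra.norm ℚ_[ℓ] (((ζ : L) - 1) ^ n * u) =
      ((ℓ ^ n * Algebra.intNorm ℤ_[ℓ] (integralClosure ℤ_[ℓ] L) u : ℤ_[ℓ]) : ℚ_[ℓ]) := by
  rw [← hζ.intNorm_sub_one hk hℓ2, ← map_pow, ← map_mul]
  exact (Algebra.algebraMap_intNorm (A := ℤ_[ℓ]) (K := ℚ_[ℓ]) (L := L) ((ζ - 1) ^ n * u)).symm

end IntegralClosure

theorem stmt_9_general (ℓ q n r i : ℕ) [Fact ℓ.Prime]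
    (hn : orderOf (q : ZMod ℓ) = n) (h2n : 2 ≤ n) (hnℓ : n < ℓ)
    (hr : r = padicValNat ℓ (q ^ n - 1)) (hi : 0 < i) (hir : i ≤ r)
    (L : Type*) [Field L] [Algebra ℚ_[ℓ] L] [Algebra ℤ_[ℓ] L]
    [IsScalarTower ℤ_[ℓ] ℚ_[ℓ] L]
    (ζ : L) (hζ : IsPrimitiveRoot ζ (ℓ ^ i))
    (hL : IntermediateField.adjoin ℚ_[ℓ] {ζ} = ⊤)
    (σ : L ≃ₐ[ℚ_[ℓ]] L) (hσ : σ ζ = ζ ^ q) :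
    IntermediateField.fixedField (Subgroup.zpowers σ) =
        IntermediateField.adjoin ℚ_[ℓ] {∑ j ∈ Finset.range n, ζ ^ q ^ j} ∧
      ∃ u : (integralClosure ℤ_[ℓ] L)ˣ,
        (∑ j ∈ Finset.range n, ζ ^ q ^ j) - (n : L) = (ζ - 1) ^ n * (u : integralClosure ℤ_[ℓ] L) := by
  have : NeZero (ℓ ^ i) := ⟨pow_ne_zero _ (Fact.out : ℓ.Prime).ne_zero⟩
  have := IsCyclotomicExtension.of_adjoin_eq_top hζ hL
  have := IsCyclotomicExtension.finiteDimensional {ℓ ^ i} ℚ_[ℓ] L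
  have hℓ2 : ℓ ≠ 2 := by omega
  have hζ' : IsPrimitiveRoot (⟨ζ, (hζ.isIntegral (NeZero.pos _)).tower_top⟩ :
      integralClosure ℤ_[ℓ] L) (ℓ ^ i) :=
    hζ.of_map_of_injective (f := algebraMap (integralClosure ℤ_[ℓ] L) L) Subtype.val_injective
  obtain ⟨u, hu⟩ := hζ'.exists_unit_sum_pow_pow_sub_eq hi.ne' hℓ2 hn (by omega) hnℓ
  replace hu : ∑ j ∈ range n, ζ ^ q ^ j - n = (ζ - 1) ^ n * u := by
    simpa using congrArg Subtype.val hu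
  have hqn : ((q ^ n : ℕ) : ZMod (ℓ ^ i)) = 1 := natCast_zmod_prime_pow_eq_one hi.ne' (hr ▸ hir)
  have horder : orderOf σ = n := by
    rw [hζ.orderOf_algEquiv_eq_orderOf_zmod hσ, orderOf_natCast_zmod_eq_of_dvd
      (dvd_pow_self ℓ hi.ne') (by simpa [hn] using hqn), hn]
  have hω : σ (∑ j ∈ range n, ζ ^ q ^ j) = ∑ j ∈ range n, ζ ^ q ^ j :=
    map_sum_pow_pow_eq_self σ hσ
      (by simpa using hζ.pow_eq_pow_iff_natCast_eq.2 (hqn.trans Nat.cast_one.symm))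
  have hfinrank : Module.finrank ℚ_[ℓ]⟮∑ j ∈ range n, ζ ^ q ^ j⟯ L ≤ n := by
    refine finrank_le_of_norm_eq_p_pow_mul_unit _
      (sub_mem (mem_adjoin_simple_self _ _) (IntermediateField.natCast_mem _ n))
      (Algebra.isUnit_intNorm_iff.2 u.isUnit) (by omega) ?_
    rw [hu]
    exact hζ'.norm_sub_one_pow_mul hi.ne' hℓ2 n u
  exact ⟨fixedField_zpowers_eq_adjoin_of_finrank_le hω (hfinrank.trans_eq horder.symm), u, hu⟩

theorem stmt_9 (ℓ q n r i : ℕ) [Fact ℓ.Prime] (hq : IsPrimePow q) (hndvd : ¬ ℓ ∣ q)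
    (hn : orderOf (q : ZMod ℓ) = n) (h2n : 2 ≤ n) (hnℓ : n < ℓ)
    (hr : r = padicValNat ℓ (q ^ n - 1)) (hi : 0 < i) (hir : i ≤ r)
    (L : Type*) [Field L] [Algebra ℚ_[ℓ] L] [Algebra ℤ_[ℓ] L]
    [IsScalarTower ℤ_[ℓ] ℚ_[ℓ] L]
    (ζ : L) (hζ : IsPrimitiveRoot ζ (ℓ ^ i))
    (hL : IntermediateField.adjoin ℚ_[ℓ] {ζ} = ⊤)
    (σ : L ≃ₐ[ℚ_[ℓ]] L) (hσ : σ ζ = ζ ^ q) :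
    IntermediateField.fixedField (Subgroup.zpowers σ) =
        IntermediateField.adjoin ℚ_[ℓ] {∑ j ∈ Finset.range n, ζ ^ q ^ j} ∧
      ∃ u : (integralClosure ℤ_[ℓ] L)ˣ,
        (∑ j ∈ Finset.range n, ζ ^ q ^ j) - (n : L) = (ζ - 1) ^ n * (u : integralClosure ℤ_[ℓ] L) :=
  stmt_9_general ℓ q n r i hn h2n hnℓ hr hi hir L ζ hζ hL σ hσ
end

section
/- Let $R$ be a reduced commutative ring, $q \geq 2$ and $n \geq 1$ integers, and let $F, P$ be $n \times n$ matrices over $R$ with $F$ invertible, satisfying $F P F^{-1} = P^q$. Suppose moreover that over every algebraically closed field $\Omega$ to which $R$ maps, the image $P_\Omega$ of $P$ has all eigenvalues equal to roots of unity of order dividing $\ell^r$ (where $\ell^r \| q^n - 1$ in the relevant arithmetic setting), and that $P$ is congruent to the identity modulo $\ell$. Then if some eigenvalue of $P_\Omega$ is nontrivial, the eigenvalues of $P_\Omega$ are $\zeta, \zeta^q, \ldots, \zeta^{q^{n-1}}$ for a single nontrivial $\ell^r$-th root of unity $\zeta$, and all coefficients of the characteristic polynomial of $F_\Omega$ vanish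 except the constant term (the determinant). -/
/-!
Pick a nontrivial eigenvalue `ζ` of `P` with eigenvector `w`. The relation `P F⁻¹ = F⁻¹ P ^ q`
makes `F⁻ʲ w` an eigenvector for `ζ ^ q ^ j`. Since `ℓ` divides the order of `ζ`, these `n`
eigenvalues are distinct exactly as long as `q ^ j` stays distinct modulo `ℓ`, i.e. for `j < n`;
they therefore exhaust the spectrum of `P` and every eigenspace is a line. As
`ζ ^ q ^ n = ζ`, the vector `F⁻ⁿ w` lies on the line through `w`, so `w` is a cyclic vector for
`F⁻¹` with `F⁻ⁿ w = c • w`, which forces `charpoly F⁻¹ = X ^ n - c`. The characteristic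
polynomial of `F` is, up to a constant, the reverse of that one.
-/

open Polynomial Module

theorem dvd_orderOf_of_pow_prime_pow_eq_one {M : Type*} [Monoid M] {ζ : M} {ℓ r : ℕ}
    (hℓ : ℓ.Prime) (hζ : ζ ^ ℓ ^ r = 1) (hζ1 : ζ ≠ 1) : ℓ ∣ orderOf ζ := by
  obtain ⟨s, -, hs⟩ := (Nat.dvd_prime_pow hℓ).1 (orderOf_dvd_of_pow_eq_one hζ)
  rcases s with _ | s
  · exact absurd (orderOf_eq_one_iff.1 (by simpa using hs)) hζ1
  · exact hs ▸ dvd_pow_self ℓ s.succ_ne_zero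

theorem IsOfFinOrder.injOn_pow_pow {M : Type*} [Monoid M] {ζ : M} (hζ : IsOfFinOrder ζ)
    {ℓ : ℕ} (hℓ : ℓ ∣ orderOf ζ) (q : ℕ) :
    Set.InjOn (fun j => ζ ^ q ^ j) (Set.Iio (orderOf (q : ZMod ℓ))) := by
  intro i hi j hj h
  have hq : IsOfFinOrder (q : ZMod ℓ) := orderOf_pos_iff.1 (Nat.zero_lt_of_lt hi)
  have hmod : q ^ i ≡ q ^ j [MOD ℓ] := (hζ.pow_eq_pow_iff_modEq.1 h).of_dvd hℓ
  rw [← ZMod.natCast_eq_natCast_iff, Nat.cast_pow, Nat.cast_pow, hq.pow_eq_pow_iff_modEq] at hmod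
  exact hmod.eq_of_lt_of_lt hi hj

theorem pow_eq_self_of_dvd_sub_one {M : Type*} [Monoid M] {ζ : M} {m k : ℕ} (hζ : ζ ^ m = 1)
    (hk : 1 ≤ k) (hdvd : m ∣ k - 1) : ζ ^ k = ζ := by
  obtain ⟨a, ha⟩ := hdvd
  rw [← Nat.sub_add_cancel hk, pow_succ, ha, pow_mul, hζ, one_pow, one_mul]

theorem Set.InjOn.nodup_map_range {α : Type*} {f : ℕ → α} {n : ℕ}
    (hf : Set.InjOn f (Set.Iio n)) : ((Multiset.range n).map f).Nodup :=
  (Multiset.nodup_range n).map_on fun _ hi _ hj h =>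
    hf (Multiset.mem_range.1 hi) (Multiset.mem_range.1 hj) h

theorem Polynomial.roots_eq_of_nodup {R : Type*} [CommRing R] [IsDomain R] {p : R[X]}
    {s : Multiset R} (hp : p ≠ 0) (hs : s.Nodup) (hroots : ∀ x ∈ s, p.IsRoot x)
    (hdeg : p.natDegree ≤ Multiset.card s) : p.roots = s :=
  (Multiset.eq_of_le_of_card_le
    ((Multiset.le_iff_subset hs).2 fun x hx => (mem_roots hp).2 (hroots x hx))
    ((card_roots' p).trans hdeg)).symm

theorem Matrix.coeff_charpoly_inv_eq_zero {n R : Type*} [Fintype n] [DecidableEq n]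
    [CommRing R] [Nontrivial R] {A : Matrix n n R} (hA : IsUnit A)
    (h : ∀ i, 0 < i → i < Fintype.card n → A.charpoly.coeff i = 0) :
    ∀ i, 0 < i → i < Fintype.card n → A⁻¹.charpoly.coeff i = 0 := by
  intro i hi hin
  rw [charpoly_inv A hA, ← reverse_charpoly, ← C_1, ← C_neg, ← C_pow, ← C_mul, coeff_C_mul,
    coeff_reverse, charpoly_natDegree_eq_dim, revAt_le hin.le, h _ (by omega) (by omega),
    mul_zero]

namespace LinearMap

theorem charpoly_eq_X_pow_sub_C_of_linearIndependent {R M : Type*} [CommRing R] [Nontrivial R]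
    [AddCommGroup M] [Module R M] [Module.Free R M] [Module.Finite R M] {n : ℕ}
    (hM : finrank R M = n) (hn : 0 < n) (f : End R M) (w : M) (c : R)
    (hli : LinearIndependent R fun j : Fin n => (f ^ (j : ℕ)) w) (hw : (f ^ n) w = c • w) :
    f.charpoly = X ^ n - C c := by
  set d := f.charpoly - (X ^ n - C c)
  have hdeg : d.natDegree < n := by
    have hXn : (X ^ n - C c).Monic := monic_X_pow_sub_C c hn.ne'
    by_cases hd0 : d = 0
    · simpa [hd0] using hn
    rw [natDegree_lt_iff_degree_lt hd0, ← hM, ← f.charpoly_natDegree,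
      ← degree_eq_natDegree f.charpoly_monic.ne_zero]
    refine degree_sub_lt_left ?_ f.charpoly_monic.ne_zero
      (f.charpoly_monic.leadingCoeff.trans hXn.leadingCoeff.symm)
    rw [degree_eq_natDegree f.charpoly_monic.ne_zero, degree_eq_natDegree hXn.ne_zero,
      natDegree_X_pow_sub_C, f.charpoly_natDegree, hM]
  have hd : aeval f d w = 0 := by
    simp [d, hw, aeval_self_charpoly]
  have hcoeff : ∀ j : Fin n, d.coeff j = 0 := by
    refine Fintype.linearIndependent_iff.1 hli (fun j => d.coeff j) ?_
    rw [← hd, aeval_eq_sum_range' hdeg, LinearMap.sum_apply, ← Fin.sum_univ_eq_sum_range]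
    rfl
  rw [← sub_eq_zero]
  ext i
  rw [coeff_zero]
  rcases lt_or_ge i n with hi | hi
  · exact hcoeff ⟨i, hi⟩
  · exact coeff_eq_zero_of_natDegree_lt (hdeg.trans_le hi)

theorem exists_smul_eq_of_rootMultiplicity_le_one {K V : Type*} [Field K] [AddCommGroup V]
    [Module K V] [FiniteDimensional K V] {f : End K V} {μ : K}
    (hμ : f.charpoly.rootMultiplicity μ ≤ 1) {w u : V} (hw : f.HasEigenvector μ w)
    (hu : u ∈ f.eigenspace μ) : ∃ c : K, c • w = u := by
  obtain ⟨v, hv⟩ := finrank_le_one_iff.1 ((finrank_eigenspace_le f μ).trans hμ)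
  obtain ⟨a, ha⟩ := hv ⟨w, hw.1⟩
  obtain ⟨b, hb⟩ := hv ⟨u, hu⟩
  have hw' : w = a • (v : V) := congrArg Subtype.val ha.symm
  have hu' : u = b • (v : V) := congrArg Subtype.val hb.symm
  have ha0 : a ≠ 0 := by
    rintro rfl
    exact hw.2 (by simpa using hw')
  refine ⟨b * a⁻¹, ?_⟩
  rw [hw', hu', smul_smul, mul_assoc, inv_mul_cancel₀ ha0, mul_one]

end LinearMap

namespace Module.End

section CommRing

variable {R M : Type*} [CommRing R] [AddCommGroup M] [Module R M] {p g : End R M} {q : ℕ}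

theorem HasEigenvector.apply_of_mul_eq_mul_pow (hpg : p * g = g * p ^ q)
    (hg : Function.Injective g) {t : R} {v : M} (hv : p.HasEigenvector t v) :
    p.HasEigenvector (t ^ q) (g v) := by
  refine hasEigenvector_iff.2 ⟨mem_eigenspace_iff.2 ?_, (map_ne_zero_iff g hg).2 hv.2⟩
  rw [← mul_apply, hpg, mul_apply, hv.pow_apply, map_smul]

theorem HasEigenvector.pow_apply_of_mul_eq_mul_pow (hpg : p * g = g * p ^ q)
    (hg : Function.Injective g) {t : R} {v : M} (hv : p.HasEigenvector t v) (j : ℕ) :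
    p.HasEigenvector (t ^ q ^ j) ((g ^ j) v) := by
  induction j with
  | zero => simpa using hv
  | succ j ih =>
    rw [pow_succ' g j, mul_apply, pow_succ q j, pow_mul]
    exact ih.apply_of_mul_eq_mul_pow hpg hg

end CommRing

variable {K V : Type*} [Field K] [AddCommGroup V] [Module K V] [FiniteDimensional K V]
  {n q : ℕ} {p g : End K V} {ζ : K} {w : V}

theorem roots_charpoly_eq_map_pow_pow (hV : finrank K V = n) (hpg : p * g = g * p ^ q)
    (hg : Function.Injective g) (hw : p.HasEigenvector ζ w)
    (hinj : Set.InjOn (fun j => ζ ^ q ^ j) (Set.Iio n)) :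
    p.charpoly.roots = (Multiset.range n).map fun j => ζ ^ q ^ j := by
  refine roots_eq_of_nodup p.charpoly_monic.ne_zero hinj.nodup_map_range ?_
    (by simp [LinearMap.charpoly_natDegree, hV])
  intro x hx
  obtain ⟨j, -, rfl⟩ := Multiset.mem_map.1 hx
  exact (hasEigenvalue_iff_isRoot_charpoly _ _).1
    (hasEigenvalue_of_hasEigenvector (hw.pow_apply_of_mul_eq_mul_pow hpg hg j))

theorem exists_charpoly_eq_X_pow_sub_C_of_mul_eq_mul_pow (hV : finrank K V = n) (hn : 0 < n)
    (hpg : p * g = g * p ^ q) (hg : Function.Injective g) (hw : p.HasEigenvector ζ w)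
    (hinj : Set.InjOn (fun j => ζ ^ q ^ j) (Set.Iio n)) (hper : ζ ^ q ^ n = ζ) :
    ∃ c : K, g.charpoly = X ^ n - C c := by
  have hv := hw.pow_apply_of_mul_eq_mul_pow hpg hg
  have hli : LinearIndependent K fun j : Fin n => (g ^ (j : ℕ)) w :=
    eigenvectors_linearIndependent' p (fun j : Fin n => ζ ^ q ^ (j : ℕ))
      (fun i j h => Fin.ext (hinj i.2 j.2 h)) _ fun j => hv j
  have hmult : p.charpoly.rootMultiplicity ζ ≤ 1 := by
    classical
    rw [← count_roots, roots_charpoly_eq_map_pow_pow hV hpg hg hw hinj]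
    exact Multiset.nodup_iff_count_le_one.1 hinj.nodup_map_range ζ
  obtain ⟨c, hc⟩ :=
    LinearMap.exists_smul_eq_of_rootMultiplicity_le_one hmult hw (hper ▸ (hv n).1)
  exact ⟨c, LinearMap.charpoly_eq_X_pow_sub_C_of_linearIndependent hV hn g w c hli hc.symm⟩

end Module.End

theorem stmt_17_general (ℓ q n r : ℕ) (hℓ : ℓ.Prime) (hq : IsPrimePow q)
    (hn : orderOf (q : ZMod ℓ) = n) (h2n : 2 ≤ n)
    (hr : r = padicValNat ℓ (q ^ n - 1))
    (Ω : Type*) [Field Ω]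
    (F P : Matrix (Fin n) (Fin n) Ω) (hF : IsUnit F.det)
    (hrel : F * P * F⁻¹ = P ^ q)
    (hunity : ∀ lam ∈ P.charpoly.roots, lam ^ ℓ ^ r = 1)
    (hnontriv : ∃ lam ∈ P.charpoly.roots, lam ≠ 1) :
    ∃ ζ : Ω, ζ ^ ℓ ^ r = 1 ∧ ζ ≠ 1 ∧
      P.charpoly.roots = (Multiset.range n).map (fun j => ζ ^ q ^ j) ∧
      ∀ i : ℕ, 0 < i → i < n → F.charpoly.coeff i = 0 := by
  obtain ⟨ζ, hζroot, hζ1⟩ := hnontriv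
  have hζ : ζ ^ ℓ ^ r = 1 := hunity ζ hζroot
  have hinj : Set.InjOn (fun j => ζ ^ q ^ j) (Set.Iio n) :=
    hn ▸ (isOfFinOrder_iff_pow_eq_one.2 ⟨_, pow_pos hℓ.pos r, hζ⟩).injOn_pow_pow
      (dvd_orderOf_of_pow_prime_pow_eq_one hℓ hζ hζ1) q
  have hper : ζ ^ q ^ n = ζ :=
    pow_eq_self_of_dvd_sub_one hζ (Nat.one_le_pow _ _ hq.pos) (hr ▸ pow_padicValNat_dvd)
  have hFinv : IsUnit F⁻¹ := Matrix.isUnit_nonsing_inv_iff.2 ((F.isUnit_iff_isUnit_det).2 hF)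
  have hPF : P * F⁻¹ = F⁻¹ * P ^ q := by
    rw [← hrel, ← mul_assoc, ← mul_assoc, F.nonsing_inv_mul hF, one_mul]
  set p := Matrix.toLinAlgEquiv' P
  set g := Matrix.toLinAlgEquiv' F⁻¹
  have hpg : p * g = g * p ^ q := by simp only [p, g, ← map_mul, ← map_pow, hPF]
  have hg : Function.Injective g := ((Module.End.isUnit_iff g).1 (hFinv.map _)).1
  have hcharpoly (A : Matrix (Fin n) (Fin n) Ω) :
      (Matrix.toLinAlgEquiv' A).charpoly = A.charpoly :=
    Matrix.charpoly_toLin' A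
  obtain ⟨w, hw⟩ := ((Module.End.hasEigenvalue_iff_isRoot_charpoly p ζ).2
    (by rw [hcharpoly]; exact (mem_roots P.charpoly_monic.ne_zero).1 hζroot)).exists_hasEigenvector
  have hV : finrank Ω (Fin n → Ω) = n := finrank_fin_fun Ω
  obtain ⟨c, hc⟩ := Module.End.exists_charpoly_eq_X_pow_sub_C_of_mul_eq_mul_pow hV (by omega)
    hpg hg hw hinj hper
  refine ⟨ζ, hζ, hζ1, hcharpoly P ▸ Module.End.roots_charpoly_eq_map_pow_pow hV hpg hg hw hinj,
    ?_⟩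
  have hFinv_coeff := Matrix.coeff_charpoly_inv_eq_zero hFinv fun i hi hin => by
    rw [← hcharpoly, hc]
    simp [coeff_X_pow, coeff_C, hi.ne', (Fintype.card_fin n ▸ hin).ne]
  simpa [F.nonsing_inv_nonsing_inv hF] using hFinv_coeff

theorem stmt_17 (ℓ q n r : ℕ) (hℓ : ℓ.Prime) (hq : IsPrimePow q) (hndvd : ¬ ℓ ∣ q)
    (hn : orderOf (q : ZMod ℓ) = n) (h2n : 2 ≤ n) (hnℓ : n < ℓ)
    (hr : r = padicValNat ℓ (q ^ n - 1))
    (Ω : Type*) [Field Ω] [IsAlgClosed Ω] [CharZero Ω]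
    (F P : Matrix (Fin n) (Fin n) Ω) (hF : IsUnit F.det)
    (hrel : F * P * F⁻¹ = P ^ q)
    (hunity : ∀ lam ∈ P.charpoly.roots, lam ^ ℓ ^ r = 1)
    (hnontriv : ∃ lam ∈ P.charpoly.roots, lam ≠ 1) :
    ∃ ζ : Ω, ζ ^ ℓ ^ r = 1 ∧ ζ ≠ 1 ∧
      P.charpoly.roots = (Multiset.range n).map (fun j => ζ ^ q ^ j) ∧
      ∀ i : ℕ, 0 < i → i < n → F.charpoly.coeff i = 0 :=
  stmt_17_general ℓ q n r hℓ hq hn h2n hr Ω F P hF hrel hunity hnontriv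
end

section
/- Let $\ell$ be a prime, $q$ a prime power with multiplicative order $n$ modulo $\ell$, $2 \leq n < \ell$, $r = \mathrm{ord}_\ell(q^n - 1)$, and let $\zeta$ be a primitive $\ell^r$-th root of unity over $\mathbb{Q}_\ell$. For each integer $j$, the element $\zeta^j + \zeta^{jq} + \cdots + \zeta^{jq^{n-1}}$ lies in the $\mathbb{Z}_\ell$-subalgebra of $\mathbb{Z}_\ell[\zeta]$ generated by $\omega = \zeta + \zeta^q + \cdots + \zeta^{q^{n-1}}$; that is, there exists $h \in \mathbb{Z}_\ell[Y]$ with $\zeta^j + \zeta^{jq} + \cdots + \zeta^{jq^{n-1}} = h(\omega)$. -/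
/-!
Let `A = ℤ_ℓ[X]/(X^N - 1)` with `N = ℓ^r`, let `ρ` be the class of `X` and `τ` the endomorphism
`ρ ↦ ρ^q`. Since `N ∣ q^n - 1`, every orbit sum `∑ᵢ ρ^(a qⁱ)` is `τ`-invariant, so it suffices to
show that the `τ`-invariants of `A` form `ℤ_ℓ[ε]`, `ε = ∑ᵢ ρ^(qⁱ)`, and to evaluate at `ρ = ζ`.

Modulo `ℓ`, `A/ℓA = 𝔽_ℓ[y]/(y^N)` with `y = ρ - 1`, and `τ y ≡ q y mod y²`. An invariant with
lowest term `c yᵏ` therefore has `qᵏ = 1`, i.e. `n ∣ k`, whereas `ε - n = (n/n!) yⁿ + O(yⁿ⁺¹)`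
because `∑ᵢ (qⁱ choose k)` vanishes mod `ℓ` for `0 < k < n` (this is where `n < ℓ` is needed).
Subtracting multiples of powers of `ε - n` removes an invariant's terms order by order, so the
invariants mod `ℓ` are `𝔽_ℓ[ε]`. As `A` has no `ℓ`-torsion, every invariant of `A` lies in
`ℤ_ℓ[ε] + ℓ^K A` for all `K`, and Krull's intersection theorem in the finite `ℤ_ℓ`-module
`A/ℤ_ℓ[ε]` concludes.
-/

open Polynomial Finset
open scoped Nat

theorem dvd_add_mul_pow_sub_pow {B : Type*} [CommRing B] (a s y : B) (k : ℕ) :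
    y ∣ (a + s * y) ^ k - a ^ k := by
  have h := sub_dvd_pow_sub_pow (a + s * y) a k
  rw [add_sub_cancel_left] at h
  exact (dvd_mul_left y s).trans h

section OrbitSum

variable {B : Type*} [CommRing B]

def orbitSum (ρ : B) (q n a : ℕ) : B := ∑ i ∈ range n, ρ ^ (a * q ^ i)

theorem orbitSum_pow_succ_eq {ρ : B} {N q n : ℕ} (hρ : ρ ^ N = 1) (hqn : q ^ n ≡ 1 [MOD N])
    (a : ℕ) : ∑ i ∈ range n, ρ ^ (a * q ^ (i + 1)) = orbitSum ρ q n a := by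
  have hperiod : ρ ^ (a * q ^ n) = ρ ^ (a * q ^ 0) := by
    rw [pow_eq_pow_mod _ hρ, pow_eq_pow_mod (a * q ^ 0) hρ, pow_zero]
    exact congrArg (ρ ^ ·) (hqn.mul_left a)
  have h := (sum_range_succ' (fun i => ρ ^ (a * q ^ i)) n).symm.trans
    (sum_range_succ (fun i => ρ ^ (a * q ^ i)) n)
  rw [hperiod] at h
  exact add_right_cancel h

theorem map_orbitSum {C G : Type*} [CommRing C] [FunLike G B C] [RingHomClass G B C] (ψ : G)
    (ρ : B) (q n a : ℕ) : ψ (orbitSum ρ q n a) = orbitSum (ψ ρ) q n a := by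
  simp only [orbitSum, map_sum, map_pow]

theorem map_orbitSum_of_map_eq_pow {G : Type*} [FunLike G B B] [RingHomClass G B B] (τ : G)
    {ρ : B} {N q n : ℕ} (hτ : τ ρ = ρ ^ q) (hρ : ρ ^ N = 1) (hqn : q ^ n ≡ 1 [MOD N]) (a : ℕ) :
    τ (orbitSum ρ q n a) = orbitSum ρ q n a := by
  rw [map_orbitSum, hτ, ← orbitSum_pow_succ_eq hρ hqn, orbitSum]
  refine sum_congr rfl fun i _ => ?_
  rw [← pow_mul, pow_succ]
  ring_nf

end OrbitSum

section Descent

variable {F B : Type*} [Field F] [CommRing B] [Algebra F B]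

theorem pow_eq_one_of_fixed {τ : B →ₐ[F] B} {y s x : B} {Q c : F} {k : ℕ}
    (hτy : τ y = (algebraMap F B Q + s * y) * y) (hk : ¬ y ^ (k + 1) ∣ y ^ k) (hc : c ≠ 0)
    (hx : τ x = x) (hxk : y ^ (k + 1) ∣ x - algebraMap F B c * y ^ k) : Q ^ k = 1 := by
  by_contra hQk
  set u := algebraMap F B Q + s * y
  have hτxk : y ^ (k + 1) ∣ x - algebraMap F B c * u ^ k * y ^ k := by
    have h := map_dvd τ hxk
    rw [map_sub, map_mul, map_pow, map_pow, hx, hτy, AlgHom.commutes, mul_pow, mul_pow] at h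
    exact (dvd_mul_left _ _).trans (by rwa [← mul_assoc] at h)
  have hu : y ^ (k + 1) ∣ algebraMap F B c * (u ^ k - algebraMap F B Q ^ k) * y ^ k := by
    rw [pow_succ']
    exact mul_dvd_mul ((dvd_add_mul_pow_sub_pow _ s y k).mul_left _) dvd_rfl
  have hlead : y ^ (k + 1) ∣ algebraMap F B (c * (Q ^ k - 1)) * y ^ k := by
    have h := dvd_sub (dvd_sub hxk hτxk) hu
    rw [map_mul, map_sub, map_pow, map_one]
    convert h using 1
    ring
  have hunit : IsUnit (algebraMap F B (c * (Q ^ k - 1))) :=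
    (mul_ne_zero hc (sub_ne_zero.mpr hQk)).isUnit.map _
  exact hk (hunit.dvd_mul_left.mp hlead)

/-- `hres`, `hnil` and `hreg` say that `B = F[y]/(y^N)`. -/
theorem mem_adjoin_of_fixed {τ : B →ₐ[F] B} {y g s t : B} {Q c₀ : F} {n N : ℕ}
    (hres : ∀ u : B, ∃ c : F, y ∣ u - algebraMap F B c) (hnil : y ^ N = 0)
    (hreg : ∀ k < N, ¬ y ^ (k + 1) ∣ y ^ k)
    (hτy : τ y = (algebraMap F B Q + s * y) * y) (hQ : ∀ k, Q ^ k = 1 → n ∣ k)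
    (hτg : τ g = g) (hg : g = (algebraMap F B c₀ + t * y) * y ^ n) (hc₀ : c₀ ≠ 0)
    {x : B} (hx : τ x = x) : x ∈ Algebra.adjoin F {g} := by
  -- descending induction on the `y`-adic order of `z`
  suffices h : ∀ j z, τ z = z → y ^ (N - j) ∣ z → z ∈ Algebra.adjoin F {g} from
    h N x hx (by simp)
  intro j
  induction j with
  | zero =>
    intro z _ hzN
    rw [Nat.sub_zero, hnil, zero_dvd_iff] at hzN
    exact hzN ▸ Subalgebra.zero_mem _
  | succ j ih =>
    intro z hz hzj
    obtain hNj | hjN := le_or_gt N j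
    · exact ih z hz (by rwa [show N - j = N - (j + 1) by omega])
    set k := N - (j + 1)
    have hk : N - j = k + 1 := by omega
    obtain ⟨u, hu⟩ := hzj
    obtain ⟨c, hc⟩ := hres u
    have hzk : y ^ (k + 1) ∣ z - algebraMap F B c * y ^ k := by
      rw [hu, pow_succ, mul_comm _ (y ^ k), ← mul_sub]
      exact mul_dvd_mul_left _ hc
    by_cases hc0 : c = 0
    · exact ih z hz (by rw [hk]; simpa [hc0] using hzk)
    obtain ⟨m, hm⟩ := hQ k (pow_eq_one_of_fixed hτy (hreg k (by omega)) hc0 hz hzk)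
    set γ := algebraMap F B (c / c₀ ^ m) * g ^ m with hγdef
    have hγ : γ ∈ Algebra.adjoin F {g} :=
      Subalgebra.mul_mem _ (Subalgebra.algebraMap_mem _ _)
        (Subalgebra.pow_mem _ (Algebra.self_mem_adjoin_singleton F g) m)
    have hτγ : τ γ = γ := by rw [map_mul, AlgHom.commutes, map_pow, hτg]
    have hγk : y ^ (k + 1) ∣ γ - algebraMap F B c * y ^ k := by
      have hcm : algebraMap F B (c / c₀ ^ m) * algebraMap F B c₀ ^ m = algebraMap F B c := by
        rw [← map_pow, ← map_mul, div_mul_cancel₀ _ (pow_ne_zero m hc₀)]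
      have h : γ - algebraMap F B c * y ^ k = algebraMap F B (c / c₀ ^ m) *
          ((algebraMap F B c₀ + t * y) ^ m - algebraMap F B c₀ ^ m) * y ^ k := by
        rw [← hcm, hm, hγdef, hg, mul_pow, ← pow_mul]
        ring
      rw [h, pow_succ']
      exact mul_dvd_mul ((dvd_add_mul_pow_sub_pow _ t y m).mul_left _) dvd_rfl
    have hrest := ih (z - γ) (by rw [map_sub, hz, hτγ]) (by
      rw [hk]
      convert dvd_sub hzk hγk using 1
      ring)
    simpa using Subalgebra.add_mem _ hrest hγ

end Descent

namespace AdjoinRoot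

variable {R S : Type*} [CommRing R] [CommRing S]

theorem exists_dvd_sub_algebraMap {f : R[X]} (a : R) (u : AdjoinRoot f) :
    ∃ c : R, root f - algebraMap R _ a ∣ u - algebraMap R _ c := by
  obtain ⟨p, rfl⟩ := mk_surjective u
  obtain ⟨w, hw⟩ := X_sub_C_dvd_sub_C_eval (a := a) (p := p)
  refine ⟨p.eval a, mk f w, ?_⟩
  rw [algebraMap_eq, ← mk_C, ← mk_C, ← mk_X, ← map_sub, ← map_sub, hw, map_mul]

theorem root_sub_algebraMap_pow_eq_zero {f : R[X]} {a : R} {N : ℕ} (hf : f = (X - C a) ^ N) :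
    (root f - algebraMap R _ a) ^ N = 0 := by
  rw [algebraMap_eq, ← mk_C, ← mk_X, ← map_sub, ← map_pow, ← hf, mk_self]

theorem not_root_sub_algebraMap_pow_succ_dvd [IsDomain R] {f : R[X]} {a : R} {N k : ℕ}
    (hf : f = (X - C a) ^ N) (hk : k < N) :
    ¬ (root f - algebraMap R _ a) ^ (k + 1) ∣ (root f - algebraMap R _ a) ^ k := by
  rintro ⟨b, hb⟩
  obtain ⟨p, rfl⟩ := mk_surjective b
  rw [algebraMap_eq, ← mk_C, ← mk_X, ← map_sub, ← map_pow, ← map_pow, ← map_mul,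
    ← sub_eq_zero, ← map_sub, mk_eq_zero, hf] at hb
  have hdvd : (X - C a) ^ (k + 1) ∣ (X - C a) ^ k := by
    have h := dvd_add ((pow_dvd_pow _ hk).trans hb) (dvd_mul_right ((X - C a) ^ (k + 1)) p)
    rwa [sub_add_cancel] at h
  rw [pow_dvd_pow_iff (X_sub_C_ne_zero a) (not_isUnit_X_sub_C a)] at hdvd
  omega

theorem root_X_pow_sub_one_pow (N : ℕ) : root (X ^ N - 1 : R[X]) ^ N = 1 := by
  have h := mk_self (f := (X ^ N - 1 : R[X]))
  rwa [map_sub, map_pow, mk_X, map_one, sub_eq_zero] at h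

variable (R) in
noncomputable def powRootAlgHom (N q : ℕ) :
    AdjoinRoot (X ^ N - 1 : R[X]) →ₐ[R] AdjoinRoot (X ^ N - 1 : R[X]) :=
  liftAlgHom _ (Algebra.ofId R _) (root _ ^ q) <| by
    rw [eval₂_sub, eval₂_X_pow, eval₂_one, pow_right_comm, root_X_pow_sub_one_pow, one_pow,
      sub_self]

@[simp]
theorem powRootAlgHom_root (N q : ℕ) : powRootAlgHom R N q (root _) = root _ ^ q :=
  liftAlgHom_root ..

theorem map_mk {f : R →+* S} {P : R[X]} {P' : S[X]} (h : P' ∣ P.map f) (g : R[X]) :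
    AdjoinRoot.map f P P' h (mk P g) = mk P' (g.map f) := by
  rw [AdjoinRoot.map, lift_mk, ← aeval_eq, aeval_def, eval₂_map]
  rfl

theorem map_aeval {f : R →+* S} {P : R[X]} {P' : S[X]} (h : P' ∣ P.map f) (x : AdjoinRoot P)
    (H : R[X]) :
    AdjoinRoot.map f P P' h (aeval x H) = aeval (AdjoinRoot.map f P P' h x) (H.map f) := by
  rw [aeval_def, hom_eval₂, aeval_def, eval₂_map]
  congr 1
  ext c
  simp [algebraMap_eq]

theorem exists_eq_smul_of_map_eq_zero {f : R →+* S} (hf : Function.Surjective f) {p : R}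
    (hker : RingHom.ker f = Ideal.span {p}) {P : R[X]} {P' : S[X]} (hP : P.map f = P')
    {z : AdjoinRoot P} (hz : AdjoinRoot.map f P P' hP.symm.dvd z = 0) : ∃ z', z = p • z' := by
  obtain ⟨g, rfl⟩ := mk_surjective z
  rw [map_mk, mk_eq_zero, ← hP] at hz
  obtain ⟨u, hu⟩ := hz
  obtain ⟨U, rfl⟩ := map_surjective f hf u
  have hgU : g - P * U ∈ RingHom.ker (mapRingHom f) := by
    rw [RingHom.mem_ker, coe_mapRingHom, Polynomial.map_sub, Polynomial.map_mul, hu, sub_self]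
  rw [ker_mapRingHom, hker, Ideal.map_span, Set.image_singleton, Ideal.mem_span_singleton] at hgU
  obtain ⟨G, hG⟩ := hgU
  refine ⟨mk P G, ?_⟩
  rw [Algebra.smul_def, algebraMap_eq, ← mk_C, ← map_mul, mk_eq_mk]
  exact ⟨U, by linear_combination hG⟩

theorem map_powRootAlgHom (f : R →+* S) {N : ℕ}
    (h : (X ^ N - 1 : S[X]) ∣ (X ^ N - 1 : R[X]).map f) (q : ℕ)
    (z : AdjoinRoot (X ^ N - 1 : R[X])) :
    AdjoinRoot.map f _ _ h (powRootAlgHom R N q z) =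
      powRootAlgHom S N q (AdjoinRoot.map f _ _ h z) := by
  refine RingHom.congr_fun (ringHom_ext (f := (AdjoinRoot.map f _ _ h).comp
    (powRootAlgHom R N q : _ →+* _)) (g := (powRootAlgHom S N q : _ →+* _).comp
    (AdjoinRoot.map f _ _ h)) (RingHom.ext fun c => ?_) ?_) z
  · simp only [RingHom.coe_comp, RingHom.coe_coe, Function.comp_apply, ← algebraMap_eq,
      AlgHom.commutes]
    rw [algebraMap_eq, map_of, ← algebraMap_eq, AlgHom.commutes]
  · simp

end AdjoinRoot

section RootsOfUnitySums

variable {F : Type*} [Field F]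

theorem sum_range_pow_pow_eq_ite {Q : F} {n : ℕ} (hQ : orderOf Q = n) (d : ℕ) :
    ∑ i ∈ range n, (Q ^ d) ^ i = if n ∣ d then (n : F) else 0 := by
  split_ifs with hd
  · simp [(orderOf_dvd_iff_pow_eq_one.mp (hQ ▸ hd))]
  · have hQd : Q ^ d ≠ 1 := fun h => hd (hQ ▸ orderOf_dvd_of_pow_eq_one h)
    rw [geom_sum_eq hQd, ← pow_mul, mul_comm, pow_mul, ← hQ, pow_orderOf_eq_one, one_pow,
      sub_self, zero_div]

theorem sum_range_eval_pow {Q : F} {n : ℕ} (hQ : orderOf Q = n) (hn : 0 < n) {P : F[X]}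
    (hP : P.natDegree ≤ n) :
    ∑ i ∈ range n, P.eval (Q ^ i) = n * (P.coeff 0 + P.coeff n) := by
  obtain ⟨m, rfl⟩ : ∃ m, n = m + 1 := ⟨n - 1, by omega⟩
  have heval : ∀ i, P.eval (Q ^ i) = ∑ d ∈ range (m + 2), P.coeff d * (Q ^ d) ^ i := fun i => by
    rw [eval_eq_sum_range' (Nat.lt_succ_of_le hP)]
    simp_rw [pow_right_comm Q i]
  rw [sum_congr rfl fun i _ => heval i, sum_comm]
  simp_rw [← mul_sum, sum_range_pow_pow_eq_ite hQ]
  rw [sum_range_succ, sum_range_succ', sum_eq_zero fun d hd => ?_]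
  · simp only [dvd_zero, ↓reduceIte, Nat.cast_add, Nat.cast_one, zero_add, dvd_refl]
    ring
  · rw [if_neg (Nat.not_dvd_of_pos_of_lt d.succ_pos (by simpa using hd)), mul_zero]

theorem sum_range_choose_pow_mul_factorial {q n k : ℕ} (hq : orderOf (q : F) = n) (hn : 0 < n)
    (hk : 0 < k) (hkn : k ≤ n) :
    (∑ i ∈ range n, ((q ^ i).choose k : F)) * k ! = if k = n then (n : F) else 0 := by
  have hP : ∀ m : ℕ, (m.choose k : F) * k ! = (descPochhammer F k).eval (m : F) := fun m => by
    rw [descPochhammer_eval_eq_descFactorial, Nat.descFactorial_eq_factorial_mul_choose]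
    push_cast
    ring
  have hcoeff : (descPochhammer F k).coeff n = if k = n then 1 else 0 := by
    split_ifs with h
    · subst h
      simpa [descPochhammer_natDegree] using (monic_descPochhammer F k).coeff_natDegree
    · exact coeff_eq_zero_of_natDegree_lt (by rw [descPochhammer_natDegree]; omega)
  simp_rw [sum_mul, hP, Nat.cast_pow]
  rw [sum_range_eval_pow hq hn (by rw [descPochhammer_natDegree]; exact hkn), hcoeff,
    coeff_zero_eq_eval_zero, descPochhammer_ne_zero_eval_zero _ hk.ne']
  split_ifs <;> simp

theorem X_pow_succ_dvd_sum_one_add_X_pow_sub {q n : ℕ} (hq : orderOf (q : F) = n) (hn : 0 < n)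
    (hfac : (n ! : F) ≠ 0) :
    X ^ (n + 1) ∣
      ∑ i ∈ range n, (1 + X : F[X]) ^ q ^ i - C (n : F) - C ((n : F) / n !) * X ^ n := by
  rw [X_pow_dvd_iff]
  intro d hd
  simp only [coeff_sub, finsetSum_coeff, coeff_one_add_X_pow, coeff_C, coeff_C_mul, coeff_X_pow]
  obtain rfl | hd0 := Nat.eq_zero_or_pos d
  · simp [hn.ne]
  have hdfac : (d ! : F) ≠ 0 := fun h => hfac <| zero_dvd_iff.mp <|
    h ▸ Nat.cast_dvd_cast (Nat.factorial_dvd_factorial (Nat.lt_succ_iff.mp hd))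
  have h := sum_range_choose_pow_mul_factorial hq hn hd0 (Nat.lt_succ_iff.mp hd)
  rw [if_neg hd0.ne']
  split_ifs at h ⊢ with hdn
  · subst hdn
    rw [sub_zero, mul_one, sub_eq_zero, eq_div_iff hfac, h]
  · simpa [hdfac] using h

end RootsOfUnitySums

open AdjoinRoot in
theorem mem_adjoin_orbitSum_of_fixed {F : Type*} [Field F] {ℓ : ℕ} [Fact ℓ.Prime] [CharP F ℓ]
    {q n r : ℕ} (hq : orderOf (q : F) = n) (hn : 0 < n) (hnℓ : n < ℓ)
    (hqn : q ^ n ≡ 1 [MOD ℓ ^ r]) {x : AdjoinRoot (X ^ ℓ ^ r - 1 : F[X])}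
    (hx : powRootAlgHom F (ℓ ^ r) q x = x) :
    x ∈ Algebra.adjoin F {orbitSum (root (X ^ ℓ ^ r - 1 : F[X])) q n 1} := by
  set ρ := root (X ^ ℓ ^ r - 1 : F[X])
  set τ := powRootAlgHom F (ℓ ^ r) q
  set y := ρ - algebraMap F _ 1
  have hf : (X ^ ℓ ^ r - 1 : F[X]) = (X - C 1) ^ ℓ ^ r := by
    rw [map_one, sub_pow_char_pow, one_pow]
  have hρ : ρ = 1 + y := by simp [y]
  have hfac : (n ! : F) ≠ 0 := by
    rw [Ne, CharP.cast_eq_zero_iff F ℓ, (Fact.out : ℓ.Prime).dvd_factorial]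
    omega
  have hτy : ∃ s, τ y = (algebraMap F _ q + s * y) * y := by
    obtain ⟨s, hs⟩ := binomExpansion (X ^ q) 1 y
    refine ⟨s, ?_⟩
    simp only [eval_pow, eval_X, derivative_X_pow, eval_mul, eval_C, one_pow, mul_one,
      ← hρ] at hs
    rw [map_sub, powRootAlgHom_root, AlgHom.commutes, hs, map_natCast, map_one]
    ring
  have hg : ∃ t, orbitSum ρ q n 1 - algebraMap F _ n =
      (algebraMap F _ ((n : F) / n !) + t * y) * y ^ n := by
    obtain ⟨t, ht⟩ := map_dvd (aeval y) (X_pow_succ_dvd_sum_one_add_X_pow_sub hq hn hfac)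
    refine ⟨t, ?_⟩
    simp only [map_sub, map_sum, map_mul, map_pow, map_add, map_one, aeval_X, aeval_C,
      ← hρ] at ht
    simp only [orbitSum, one_mul]
    linear_combination ht
  obtain ⟨s, hs⟩ := hτy
  obtain ⟨t, ht⟩ := hg
  refine Algebra.adjoin_le ?_ (mem_adjoin_of_fixed (exists_dvd_sub_algebraMap 1)
    (root_sub_algebraMap_pow_eq_zero hf) (fun k hk => not_root_sub_algebraMap_pow_succ_dvd hf hk)
    hs (fun k hk => hq ▸ orderOf_dvd_of_pow_eq_one hk) ?_ ht ?_ hx)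
  · exact Set.singleton_subset_iff.mpr <| Subalgebra.sub_mem _
      (Algebra.self_mem_adjoin_singleton F _) (Subalgebra.algebraMap_mem _ _)
  · rw [map_sub, AlgHom.commutes, map_orbitSum_of_map_eq_pow τ (powRootAlgHom_root _ _)
      (root_X_pow_sub_one_pow _) hqn]
  · rw [Ne, div_eq_zero_iff, not_or, CharP.cast_eq_zero_iff F ℓ]
    exact ⟨Nat.not_dvd_of_pos_of_lt hn hnℓ, hfac⟩

theorem mem_of_fixed_of_forall_exists_add_smul {R A : Type*} [CommRing R] [IsNoetherianRing R]
    [IsLocalRing R] [AddCommGroup A] [Module R A] [Module.Finite R A] {p : R} (hp : ¬IsUnit p)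
    (hreg : IsSMulRegular A p) {τ : A →ₗ[R] A} {M : Submodule R A} (hM : ∀ m ∈ M, τ m = m)
    (happrox : ∀ z, τ z = z → ∃ m ∈ M, ∃ z', z = m + p • z') {z : A} (hz : τ z = z) :
    z ∈ M := by
  have hstep : ∀ z, τ z = z → ∃ m ∈ M, ∃ z', τ z' = z' ∧ z = m + p • z' := by
    intro z hz
    obtain ⟨m, hm, z', rfl⟩ := happrox z hz
    rw [map_add, map_smul, hM m hm] at hz
    exact ⟨m, hm, z', hreg (add_left_cancel hz), rfl⟩
  have hiter : ∀ K : ℕ, ∃ m ∈ M, ∃ z', τ z' = z' ∧ z = m + p ^ K • z' := by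
    intro K
    induction K with
    | zero => exact ⟨0, M.zero_mem, z, hz, by simp⟩
    | succ K ih =>
      obtain ⟨m, hm, z', hz', hzK⟩ := ih
      obtain ⟨m', hm', z'', hz'', rfl⟩ := hstep z' hz'
      exact ⟨m + p ^ K • m', M.add_mem hm (M.smul_mem _ hm'), z'', hz'',
        by rw [hzK, smul_add, smul_smul, ← pow_succ, add_assoc]⟩
  have hbot := Ideal.iInf_pow_smul_eq_bot_of_isLocalRing (M := A ⧸ M) _
    (Ideal.span_singleton_ne_top hp)
  rw [← Submodule.Quotient.mk_eq_zero, ← Submodule.mem_bot R, ← hbot, Submodule.mem_iInf]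
  intro K
  obtain ⟨m, hm, z', -, hzK⟩ := hiter K
  rw [hzK, Submodule.Quotient.mk_add, (Submodule.Quotient.mk_eq_zero M).mpr hm, zero_add,
    Submodule.Quotient.mk_smul, Ideal.span_singleton_pow]
  exact Submodule.smul_mem_smul (Ideal.mem_span_singleton_self _) Submodule.mem_top

section Padic

open AdjoinRoot

variable {ℓ q n r : ℕ} [Fact ℓ.Prime]

theorem exists_mem_adjoin_add_smul_of_fixed (hq : orderOf (q : ZMod ℓ) = n) (hn : 0 < n)
    (hnℓ : n < ℓ) (hqn : q ^ n ≡ 1 [MOD ℓ ^ r]) {z : AdjoinRoot (X ^ ℓ ^ r - 1 : ℤ_[ℓ][X])}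
    (hz : powRootAlgHom ℤ_[ℓ] (ℓ ^ r) q z = z) :
    ∃ m ∈ Algebra.adjoin ℤ_[ℓ] {orbitSum (root (X ^ ℓ ^ r - 1 : ℤ_[ℓ][X])) q n 1},
      ∃ z', z = m + (ℓ : ℤ_[ℓ]) • z' := by
  set π := AdjoinRoot.map PadicInt.toZMod (X ^ ℓ ^ r - 1 : ℤ_[ℓ][X]) (X ^ ℓ ^ r - 1) (by simp)
  set ε := orbitSum (root (X ^ ℓ ^ r - 1 : ℤ_[ℓ][X])) q n 1
  have hπε : π ε = orbitSum (root _) q n 1 := by rw [map_orbitSum, map_root]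
  have hπz : powRootAlgHom (ZMod ℓ) (ℓ ^ r) q (π z) = π z := by
    rw [← map_powRootAlgHom, hz]
  have hmem := mem_adjoin_orbitSum_of_fixed hq hn hnℓ hqn hπz
  rw [Algebra.adjoin_singleton_eq_range_aeval] at hmem
  obtain ⟨hb, hhb⟩ := (AlgHom.mem_range _).mp hmem
  obtain ⟨H, rfl⟩ := map_surjective _ (ZMod.ringHom_surjective PadicInt.toZMod) hb
  have hπ : π (z - aeval ε H) = 0 := by rw [map_sub, map_aeval, hπε, hhb, sub_self]
  obtain ⟨z', hz'⟩ := exists_eq_smul_of_map_eq_zero (ZMod.ringHom_surjective PadicInt.toZMod)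
    (by rw [PadicInt.ker_toZMod, PadicInt.maximalIdeal_eq_span_p]) (P' := X ^ ℓ ^ r - 1)
    (by simp) hπ
  refine ⟨aeval ε H, ?_, z', by rw [← hz', add_sub_cancel]⟩
  rw [Algebra.adjoin_singleton_eq_range_aeval]
  exact ⟨H, rfl⟩

theorem orbitSum_mem_adjoin_orbitSum_one (hq : orderOf (q : ZMod ℓ) = n) (hn : 0 < n)
    (hnℓ : n < ℓ) (hqn : q ^ n ≡ 1 [MOD ℓ ^ r]) (a : ℕ) :
    orbitSum (root (X ^ ℓ ^ r - 1 : ℤ_[ℓ][X])) q n a ∈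
      Algebra.adjoin ℤ_[ℓ] {orbitSum (root (X ^ ℓ ^ r - 1 : ℤ_[ℓ][X])) q n 1} := by
  set τ := powRootAlgHom ℤ_[ℓ] (ℓ ^ r) q
  have hmonic : (X ^ ℓ ^ r - 1 : ℤ_[ℓ][X]).Monic :=
    monic_X_pow_sub_C 1 (pow_ne_zero _ (Fact.out : ℓ.Prime).ne_zero)
  have := (powerBasis' hmonic).finite
  have := Module.Free.of_basis (powerBasis' hmonic).basis
  have hfixed : ∀ a, τ (orbitSum (root _) q n a) = orbitSum (root _) q n a :=
    map_orbitSum_of_map_eq_pow τ (powRootAlgHom_root _ _) (root_X_pow_sub_one_pow _) hqn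
  exact mem_of_fixed_of_forall_exists_add_smul (τ := τ.toLinearMap)
    (M := Subalgebra.toSubmodule (Algebra.adjoin ℤ_[ℓ] _)) PadicInt.p_nonunit
    (Module.IsTorsionFree.isSMulRegular
      (IsRegular.of_ne_zero (by simp [(Fact.out : ℓ.Prime).ne_zero])))
    (fun m hm => (Algebra.adjoin_le (Set.singleton_subset_iff.mpr (hfixed 1)) :
      _ ≤ AlgHom.equalizer τ (AlgHom.id _ _)) hm)
    (fun z hz => exists_mem_adjoin_add_smul_of_fixed hq hn hnℓ hqn hz) (hfixed a)

theorem exists_aeval_orbitSum_eq {L : Type*} [CommRing L] [Algebra ℤ_[ℓ] L] {ζ : L}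
    (hζ : ζ ^ ℓ ^ r = 1) (hq : orderOf (q : ZMod ℓ) = n) (hn : 0 < n) (hnℓ : n < ℓ)
    (hqn : q ^ n ≡ 1 [MOD ℓ ^ r]) (a : ℕ) :
    ∃ h : ℤ_[ℓ][X], aeval (orbitSum ζ q n 1) h = orbitSum ζ q n a := by
  set ψ := liftAlgHom (X ^ ℓ ^ r - 1 : ℤ_[ℓ][X]) (Algebra.ofId _ _) ζ (by simp [hζ])
  have hψ : ψ (root _) = ζ := liftAlgHom_root ..
  have hmem := orbitSum_mem_adjoin_orbitSum_one hq hn hnℓ hqn a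
  rw [Algebra.adjoin_singleton_eq_range_aeval] at hmem
  obtain ⟨h, hh⟩ := (AlgHom.mem_range _).mp hmem
  refine ⟨h, ?_⟩
  rw [← hψ, ← map_orbitSum, ← map_orbitSum, aeval_algHom_apply, hh]

end Padic

theorem zpow_eq_pow_toNat_emod {G : Type*} [GroupWithZero G] {ζ : G} {N : ℕ} (hN : N ≠ 0)
    (hζ : ζ ^ N = 1) (j : ℤ) : ζ ^ j = ζ ^ (j % N).toNat := by
  have hζ0 : ζ ≠ 0 := by
    rintro rfl
    simp [zero_pow hN] at hζ
  calc ζ ^ j = ζ ^ (N * (j / N) + j % N) := by rw [Int.mul_ediv_add_emod]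
    _ = ζ ^ (j % N).toNat := by
      rw [zpow_add₀ hζ0, zpow_mul, zpow_natCast, hζ, one_zpow, one_mul, ← zpow_natCast,
        Int.toNat_of_nonneg (Int.emod_nonneg j (by exact_mod_cast hN))]

theorem stmt_19_general (ℓ q n r : ℕ) [Fact ℓ.Prime] (hndvd : ¬ ℓ ∣ q)
    (hn : orderOf (q : ZMod ℓ) = n) (h2n : 2 ≤ n) (hnℓ : n < ℓ)
    (hr : r = padicValNat ℓ (q ^ n - 1))
    (L : Type*) [Field L] [Algebra ℤ_[ℓ] L]
    (ζ : L) (hζ : IsPrimitiveRoot ζ (ℓ ^ r)) (j : ℤ) :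
    ∃ h : Polynomial ℤ_[ℓ],
      Polynomial.aeval (∑ i ∈ Finset.range n, ζ ^ q ^ i) h =
        ∑ i ∈ Finset.range n, ζ ^ (j * (q : ℤ) ^ i) := by
  have hq : 0 < q := Nat.pos_of_ne_zero fun hq => hndvd (hq ▸ dvd_zero ℓ)
  have hqn : q ^ n ≡ 1 [MOD ℓ ^ r] :=
    ((Nat.modEq_iff_dvd' (Nat.one_le_pow _ _ hq)).mpr (hr ▸ pow_padicValNat_dvd)).symm
  obtain ⟨h, hh⟩ := exists_aeval_orbitSum_eq hζ.pow_eq_one hn (by omega) hnℓ hqn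
    (j % (ℓ ^ r : ℕ)).toNat
  refine ⟨h, ?_⟩
  simp only [orbitSum, one_mul] at hh
  rw [hh]
  refine sum_congr rfl fun i _ => ?_
  rw [zpow_mul, zpow_eq_pow_toNat_emod (pow_ne_zero r (Fact.out : ℓ.Prime).ne_zero)
    hζ.pow_eq_one j, ← Nat.cast_pow, zpow_natCast, ← pow_mul]

theorem stmt_19 (ℓ q n r : ℕ) [Fact ℓ.Prime] (hq : IsPrimePow q) (hndvd : ¬ ℓ ∣ q)
    (hn : orderOf (q : ZMod ℓ) = n) (h2n : 2 ≤ n) (hnℓ : n < ℓ)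
    (hr : r = padicValNat ℓ (q ^ n - 1))
    (L : Type*) [Field L] [Algebra ℚ_[ℓ] L] [Algebra ℤ_[ℓ] L]
    [IsScalarTower ℤ_[ℓ] ℚ_[ℓ] L]
    (ζ : L) (hζ : IsPrimitiveRoot ζ (ℓ ^ r)) (j : ℤ) :
    ∃ h : Polynomial ℤ_[ℓ],
      Polynomial.aeval (∑ i ∈ Finset.range n, ζ ^ q ^ i) h =
        ∑ i ∈ Finset.range n, ζ ^ (j * (q : ℤ) ^ i) :=
  stmt_19_general ℓ q n r hndvd hn h2n hnℓ hr L ζ hζ j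
end
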